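/- arXiv:1804.07702 — 7 statements merged into one kernel-verified Lean document; each statement's English description precedes it below -/
import Mathlib

section
/- The bracket defined below on 𝔥 = 𝔱 ⊕ 𝔥₁ is well defined (it respects the relations X_{zα̃} = z·X_{α̃}), is alternating, and satisfies the Jacobi identity; thus 𝔥 is a Lie algebra over R. -/
/-!
The bracket is first defined on lifted roots and then descends to `𝔥₁`: replacing a lift `α̃` by
`z α̃` with `π z = 0` multiplies `X_{α̃}` and every bracket involving it by `ν z`.

Write `E α β = ((1 - w) α, β)`. Lifts commute up to `c ^ E α β`, and since
`E α β = 2 (α, β) + (α, w β)`, the sign `(-1) ^ (α, w β) * ζ ^ E α β` is the single power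
`(-ζ) ^ E α β` of a sixth root of unity. Together with `E α β + E β α = 3 (α, β)` and `E α α = 3`
for roots, this turns every identity between structure constants into a congruence modulo 6.

Alternation and the Jacobi identity are multilinear, so they only need checking on `𝔱` and the
`X_{α̃}`; the cases involving `𝔱` hold because `X_{α̃}` has weight `α`. For three root vectors of
roots `α, β, γ`, up to rotation and transposition either `α + β + γ = 0`, or two of the roots are
opposite, or `α + β + γ` is a root and the pairings are `0, -1, -1`, or all terms vanish.
-/

open scoped TensorProduct

namespace AddMonoidHom

variable {Λ : Type*} [AddCommGroup Λ] (B : Λ →+ Λ →+ ℤ)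

lemma apply_add_add_self (hB : ∀ x y, B x y = B y x) (x y : Λ) :
    B (x + y) (x + y) = B x x + 2 * B x y + B y y := by
  simp only [map_add, add_apply, hB y x]
  ring

variable {B} (hB : ∀ x y, B x y = B y x) (hpos : ∀ x, x ≠ 0 → 0 < B x x)
  {α β : Λ} (hα : B α α = 2) (hβ : B β β = 2)
include hB hpos hα hβ

lemma neg_two_le_apply : -2 ≤ B α β := by
  have h := B.apply_add_add_self hB α β
  rcases eq_or_ne (α + β) 0 with h0 | h0
  · rw [h0, map_zero] at h
    omega
  · have := hpos _ h0
    omega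

lemma apply_eq_neg_two_iff : B α β = -2 ↔ α + β = 0 := by
  have h := B.apply_add_add_self hB α β
  refine ⟨fun hαβ => ?_, fun h0 => ?_⟩
  · by_contra h0
    have := hpos _ h0
    omega
  · rw [h0, map_zero] at h
    omega

lemma apply_eq_two_iff : B α β = 2 ↔ α = β := by
  have := apply_eq_neg_two_iff hB hpos hα (β := -β) (by simpa using hβ)
  rwa [map_neg, neg_eq_iff_eq_neg, neg_neg, ← sub_eq_add_neg, sub_eq_zero] at this

end AddMonoidHom

section Twist

variable {Λ : Type*} [AddCommGroup Λ] {B : Λ →+ Λ →+ ℤ} {w : Λ →+ Λ}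
  (hwB : ∀ x y, B (w x) (w y) = B x y) (hw : ∀ x, w (w x) + w x + x = 0)
include hwB hw

lemma apply_w_add_apply_w (x y : Λ) : B (w x) y + B x (w y) + B x y = 0 := by
  have hw3 : w (w (w y)) = y := by linear_combination (norm := abel) hw (w y) - hw y
  have h := congrArg (B x) (hw y)
  rw [map_add, map_add, map_zero, ← hwB x, hw3] at h
  linarith

lemma apply_sub_w_apply (x y : Λ) : B (x - w x) y = 2 * B x y + B x (w y) := by
  have := apply_w_add_apply_w hwB hw x y
  rw [map_sub, AddMonoidHom.sub_apply]
  omega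

lemma apply_sub_w_add_apply_sub_w (hB : ∀ x y, B x y = B y x) (x y : Λ) :
    B (x - w x) y + B (y - w y) x = 3 * B x y := by
  have := apply_w_add_apply_w hwB hw x y
  rw [apply_sub_w_apply hwB hw, apply_sub_w_apply hwB hw, hB y x, hB y (w x)]
  omega

end Twist

namespace Units

variable {R : Type*} [CommRing R] {ζ : Rˣ}

lemma neg_one_zpow_mul_zpow {m n : ℤ} (h : (2 : ℤ) ∣ m - n) :
    (-1 : Rˣ) ^ m * ζ ^ n = (-ζ) ^ n := by
  obtain ⟨k, hk⟩ := h
  rw [← neg_one_mul ζ, mul_zpow, show m = n + 2 * k by omega, zpow_add, zpow_mul]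
  simp

variable (hζ : ζ ^ 3 = 1)
include hζ

lemma neg_zpow_eq_of_dvd {m n : ℤ} (h : (6 : ℤ) ∣ m - n) : (-ζ) ^ m = (-ζ) ^ n := by
  have h6 : (-ζ) ^ (6 : ℤ) = 1 := by
    rw [show (6 : ℤ) = ((3 * 2 : ℕ) : ℤ) from rfl, zpow_natCast, pow_mul,
      Odd.neg_pow (by decide), hζ]
    simp
  obtain ⟨k, hk⟩ := h
  rw [show m = n + 6 * k by omega, zpow_add, zpow_mul, h6, one_zpow, mul_one]

lemma neg_zpow_eq_neg_of_dvd {m n : ℤ} (h : (6 : ℤ) ∣ m - n - 3) :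
    (-ζ) ^ m = -(-ζ) ^ n := by
  rw [neg_zpow_eq_of_dvd hζ (n := n + 3) (by omega), zpow_add,
    show (3 : ℤ) = ((3 : ℕ) : ℤ) from rfl, zpow_natCast, Odd.neg_pow (by decide), hζ, mul_neg_one]

lemma zpow_eq_neg_zpow_four_mul (n : ℤ) : ζ ^ n = (-ζ) ^ (4 * n) := by
  rw [zpow_mul, show (4 : ℤ) = ((4 : ℕ) : ℤ) from rfl, zpow_natCast, Even.neg_pow ⟨2, rfl⟩,
    pow_succ, hζ, one_mul]

end Units

namespace LinearMap

variable {R M N : Type*} [CommRing R] [AddCommGroup M] [Module R M] [AddCommGroup N] [Module R N]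

lemma isAlt_of_span {f : M →ₗ[R] M →ₗ[R] N} {s : Set M} (hs : Submodule.span R s = ⊤)
    (h_self : ∀ x ∈ s, f x x = 0) (h_swap : ∀ x ∈ s, ∀ y ∈ s, f x y = -f y x) : f.IsAlt := by
  have hflip : f.flip = -f :=
    ext_on hs fun y hy => ext_on hs fun x hx => by simpa using h_swap x hx y hy
  intro x
  induction (hs ▸ Submodule.mem_top : x ∈ Submodule.span R s) using Submodule.span_induction with
  | mem x hx => exact h_self x hx
  | zero => simp
  | add a b _ _ ha hb =>
    have hab : f b a = -f a b := by simpa using congr($hflip a b)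
    simp only [map_add, add_apply, ha, hb, hab]
    abel
  | smul r a _ ha => simp only [map_smul, smul_apply, ha, smul_zero]

variable (f : M →ₗ[R] M →ₗ[R] M)

def jacobiator (x y z : M) : M := f x (f y z) + f y (f z x) + f z (f x y)

lemma jacobiator_rotate (x y z : M) : jacobiator f x y z = jacobiator f y z x := by
  unfold jacobiator; abel

lemma IsAlt.jacobiator_swap {f : M →ₗ[R] M →ₗ[R] M} (hf : f.IsAlt) (x y z : M) :
    jacobiator f x z y = -jacobiator f x y z := by
  unfold jacobiator
  rw [← hf.neg y z, ← hf.neg x y, ← hf.neg z x, map_neg, map_neg, map_neg]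
  abel

lemma jacobiator_eq_zero_of_span {s : Set M} (hs : Submodule.span R s = ⊤)
    (h : ∀ x ∈ s, ∀ y ∈ s, ∀ z ∈ s, jacobiator f x y z = 0) (x y z : M) :
    jacobiator f x y z = 0 := by
  have extend : ∀ y z, (∀ x ∈ s, jacobiator f x y z = 0) → ∀ x, jacobiator f x y z = 0 := by
    intro y z hyz x
    have : f.flip (f y z) + (f y).comp (f z) + (f z).comp (f.flip y) = 0 :=
      ext_on hs fun x hx => hyz x hx
    exact congr($this x)
  refine extend y z (fun x hx => ?_) x
  rw [jacobiator_rotate]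
  refine extend z x (fun y hy => ?_) y
  rw [jacobiator_rotate]
  exact extend x y (fun z hz => h z hz x hx y hy) z

end LinearMap

def TensorProduct.evalPairing (R Λ : Type*) [CommRing R] [AddCommGroup Λ] :
    Λ →+ (R ⊗[ℤ] (Λ →+ ℤ) →ₗ[R] R) :=
  AddMonoidHom.mk'
    (fun α => TensorProduct.AlgebraTensorModule.lift <| LinearMap.toSpanSingleton R _
      ((Int.castAddHom R).comp (AddMonoidHom.eval α)).toIntLinearMap)
    (fun α β => by
      ext
      simp)

@[simp]
lemma TensorProduct.evalPairing_tmul {R Λ : Type*} [CommRing R] [AddCommGroup Λ] (α : Λ) (r : R)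
    (f : Λ →+ ℤ) : TensorProduct.evalPairing R Λ α (r ⊗ₜ f) = r * f α := by
  simp [TensorProduct.evalPairing]

structure TwistedRootDatum (Λ R Λt : Type) [AddCommGroup Λ] [CommRing R] [Group Λt] where
  B : Λ →+ Λ →+ ℤ
  B_symm : ∀ x y, B x y = B y x
  B_pos : ∀ x, x ≠ 0 → 0 < B x x
  add_laced : ∀ α, B α α = 2 → ∀ β, B β β = 2 → (B (α + β) (α + β) = 2 ↔ B α β = -1)
  w : Λ →+ Λ
  B_w_w : ∀ x y, B (w x) (w y) = B x y
  w_add : ∀ x, w (w x) + w x + x = 0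
  ζ : Rˣ
  ζ_cube : ζ ^ 3 = 1
  π : Λt → Λ
  π_mul : ∀ a b, π (a * b) = π a + π b
  c : Λt
  π_c : π c = 0
  c_cube : c ^ 3 = 1
  ker : ∀ g, π g = 0 → g = 1 ∨ g = c ∨ g = c ^ 2
  ν : Λt → R
  ν_one : ν 1 = 1
  ν_c : ν c = ζ
  ν_c_sq : ν (c ^ 2) = (ζ : R) ^ 2
  commutator : ∀ a b, a * b * a⁻¹ * b⁻¹ = c ^ B (π a - w (π a)) (π b)

noncomputable section

namespace TwistedRootDatum

variable {Λ R Λt : Type} [AddCommGroup Λ] [CommRing R] [Group Λt] (D : TwistedRootDatum Λ R Λt)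

def Φ : Set Λ := {α | D.B α α = 2}

def E : Λ →+ Λ →+ ℤ := D.B.comp (AddMonoidHom.id Λ - D.w)

lemma E_apply (α β : Λ) : D.E α β = D.B (α - D.w α) β := rfl

lemma E_add_E_swap (α β : Λ) : D.E α β + D.E β α = 3 * D.B α β :=
  apply_sub_w_add_apply_sub_w D.B_w_w D.w_add D.B_symm α β

lemma E_self {α : Λ} (hα : α ∈ D.Φ) : D.E α α = 3 := by
  have h := D.E_add_E_swap α α
  rw [show D.B α α = 2 from hα] at h
  omega

variable {D}

lemma ne_zero_of_mem_Φ {α : Λ} (hα : α ∈ D.Φ) : α ≠ 0 := by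
  rintro rfl
  simp [Φ] at hα

lemma neg_mem_Φ {α : Λ} (hα : α ∈ D.Φ) : -α ∈ D.Φ := by
  simpa [Φ] using hα

lemma add_mem_Φ_iff {α β : Λ} (hα : α ∈ D.Φ) (hβ : β ∈ D.Φ) : α + β ∈ D.Φ ↔ D.B α β = -1 :=
  D.add_laced α hα β hβ

lemma add_eq_zero_iff {α β : Λ} (hα : α ∈ D.Φ) (hβ : β ∈ D.Φ) : α + β = 0 ↔ D.B α β = -2 :=
  (D.B.apply_eq_neg_two_iff D.B_symm D.B_pos hα hβ).symm

lemma eq_iff {α β : Λ} (hα : α ∈ D.Φ) (hβ : β ∈ D.Φ) : α = β ↔ D.B α β = 2 :=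
  (D.B.apply_eq_two_iff D.B_symm D.B_pos hα hβ).symm

lemma neg_two_le {α β : Λ} (hα : α ∈ D.Φ) (hβ : β ∈ D.Φ) : -2 ≤ D.B α β :=
  D.B.neg_two_le_apply D.B_symm D.B_pos hα hβ

lemma pairings_of_add_add_mem {α β γ : Λ} (hα : α ∈ D.Φ) (hβ : β ∈ D.Φ) (hγ : γ ∈ D.Φ)
    (hαβ : α + β ≠ 0) (hβγ : β + γ ≠ 0) (hγα : γ + α ≠ 0) (hs : α + β + γ ∈ D.Φ) :
    (D.B α β = 0 ∧ D.B β γ = -1 ∧ D.B γ α = -1) ∨ (D.B β γ = 0 ∧ D.B γ α = -1 ∧ D.B α β = -1) ∨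
      (D.B γ α = 0 ∧ D.B α β = -1 ∧ D.B β γ = -1) := by
  have hs : D.B (α + β + γ) (α + β + γ) = 2 := hs
  simp only [map_add, AddMonoidHom.add_apply, D.B_symm β α, D.B_symm γ β, D.B_symm α γ] at hs
  have : D.B α α = 2 := hα
  have : D.B β β = 2 := hβ
  have : D.B γ γ = 2 := hγ
  have := (add_eq_zero_iff hα hβ).not.mp hαβ
  have := (add_eq_zero_iff hβ hγ).not.mp hβγ
  have := (add_eq_zero_iff hγ hα).not.mp hγα
  have := neg_two_le hα hβ
  have := neg_two_le hβ hγ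
  have := neg_two_le hγ hα
  have : D.B α β = 2 → D.B β γ = D.B γ α := fun h => by
    rw [← (eq_iff hα hβ).mpr h, D.B_symm]
  have : D.B β γ = 2 → D.B γ α = D.B α β := fun h => by
    rw [← (eq_iff hβ hγ).mpr h, D.B_symm]
  have : D.B γ α = 2 → D.B α β = D.B β γ := fun h => by
    rw [← (eq_iff hγ hα).mpr h, D.B_symm]
  omega

variable (D)

def ε (α β : Λ) : Rˣ := (-D.ζ) ^ D.E α β

lemma ε_eq (α β : Λ) : D.ε α β = (-1) ^ D.B α (D.w β) * D.ζ ^ D.E α β := by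
  rw [ε, Units.neg_one_zpow_mul_zpow]
  rw [E_apply, apply_sub_w_apply D.B_w_w D.w_add]
  exact ⟨-D.B α β, by ring⟩

lemma ε_swap_mul_zpow {α β : Λ} (h : D.B α β = -1) : D.ε β α * D.ζ ^ D.E β α = -D.ε α β := by
  rw [ε, ε, Units.zpow_eq_neg_zpow_four_mul D.ζ_cube, ← zpow_add]
  apply Units.neg_zpow_eq_neg_of_dvd D.ζ_cube
  have := D.E_add_E_swap α β
  omega

lemma ε_eq_of_add_add_eq_zero {α β γ : Λ} (hα : α ∈ D.Φ) (hβ : β ∈ D.Φ) (hγ : γ ∈ D.Φ)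
    (hsum : α + β + γ = 0) : D.ε β γ = D.ε α β := by
  have hαβ : D.B α β = -1 := (add_mem_Φ_iff hα hβ).mp <| by
    rw [eq_neg_of_add_eq_zero_left hsum]
    exact neg_mem_Φ hγ
  have := D.E_add_E_swap α β
  have := D.E_self hβ
  rw [ε, ε, eq_neg_of_add_eq_zero_right hsum]
  congr 1
  simp only [map_neg, map_add]
  omega

lemma ε_mul_ε_mul_zpow_eq_one {α β : Λ} (hβ : β ∈ D.Φ) (h : D.B α β = -1) :
    D.ε α β * D.ε (-β) (α + β) * D.ζ ^ D.E α β = 1 := by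
  rw [ε, ε, Units.zpow_eq_neg_zpow_four_mul D.ζ_cube, ← zpow_add, ← zpow_add,
    Units.neg_zpow_eq_of_dvd D.ζ_cube (n := 0) ?_, zpow_zero]
  have := D.E_add_E_swap α β
  have := D.E_self hβ
  simp only [map_neg, map_add, AddMonoidHom.neg_apply]
  omega

lemma ε_mul_ε_mul_zpow_mul_zpow {α β γ : Λ} (hab : D.B α β = 0) (hca : D.B γ α = -1) :
    D.ε γ α * D.ε β (γ + α) * D.ζ ^ D.E γ α * D.ζ ^ D.E β α = -(D.ε β γ * D.ε α (β + γ)) := by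
  rw [ε, ε, ε, ε, Units.zpow_eq_neg_zpow_four_mul D.ζ_cube,
    Units.zpow_eq_neg_zpow_four_mul D.ζ_cube, ← zpow_add, ← zpow_add, ← zpow_add, ← zpow_add]
  apply Units.neg_zpow_eq_neg_of_dvd D.ζ_cube
  have := D.E_add_E_swap α β
  have := D.E_add_E_swap γ α
  simp only [map_add]
  omega

lemma π_one : D.π 1 = 0 := by
  simpa using D.π_mul 1 1

lemma π_inv (g : Λt) : D.π g⁻¹ = -D.π g := by
  rw [eq_neg_iff_add_eq_zero, ← D.π_mul, inv_mul_cancel, D.π_one]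

lemma π_c_zpow (n : ℤ) : D.π (D.c ^ n) = 0 := by
  let πHom : Λt →* Multiplicative Λ := MonoidHom.mk' (fun g => .ofAdd (D.π g)) D.π_mul
  change (πHom (D.c ^ n)).toAdd = 0
  rw [map_zpow, show πHom D.c = 1 from congrArg Multiplicative.ofAdd D.π_c, one_zpow]
  rfl

lemma mul_eq_c_zpow_mul (a b : Λt) : a * b = D.c ^ D.E (D.π a) (D.π b) * (b * a) := by
  rw [E_apply, ← D.commutator]
  group

lemma commute_of_π_eq_zero {z : Λt} (hz : D.π z = 0) (g : Λt) : Commute z g := by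
  have := D.mul_eq_c_zpow_mul z g
  rwa [hz, map_zero, AddMonoidHom.zero_apply, zpow_zero, one_mul] at this

lemma c_zpow_mul_comm (n : ℤ) (g : Λt) : D.c ^ n * g = g * D.c ^ n :=
  (D.commute_of_π_eq_zero (D.π_c_zpow n) g).eq

lemma mul_comm_of_π_mul_eq_zero {a b : Λt} (hab : D.π (a * b) = 0) : b * a = a * b := by
  calc b * a = a⁻¹ * ((a * b) * a) := by group
    _ = a * b := by rw [(D.commute_of_π_eq_zero hab a).eq]; group

lemma exists_eq_c_zpow {z : Λt} (hz : D.π z = 0) : ∃ n : ℤ, z = D.c ^ n := by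
  rcases D.ker z hz with rfl | rfl | rfl
  exacts [⟨0, by simp⟩, ⟨1, by simp⟩, ⟨2, by simp⟩]

lemma ν_c_zpow (n : ℤ) : D.ν (D.c ^ n) = (D.ζ ^ n : Rˣ) := by
  have hc : D.c ^ (3 : ℤ) = 1 := by exact_mod_cast D.c_cube
  have hζ : D.ζ ^ (3 : ℤ) = 1 := by exact_mod_cast D.ζ_cube
  rw [zpow_eq_zpow_emod n hc, zpow_eq_zpow_emod n hζ]
  have : n % 3 = 0 ∨ n % 3 = 1 ∨ n % 3 = 2 := by omega
  rcases this with h | h | h <;> rw [h]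
  · simp [D.ν_one]
  · simp [D.ν_c]
  · simpa using D.ν_c_sq

lemma ν_mul {y z : Λt} (hy : D.π y = 0) (hz : D.π z = 0) : D.ν (y * z) = D.ν y * D.ν z := by
  obtain ⟨m, rfl⟩ := D.exists_eq_c_zpow hy
  obtain ⟨n, rfl⟩ := D.exists_eq_c_zpow hz
  rw [← zpow_add, D.ν_c_zpow, D.ν_c_zpow, D.ν_c_zpow, zpow_add, Units.val_mul]


abbrev Φt := {g : Λt // D.π g ∈ D.Φ}

def Rel : Submodule R (D.Φt →₀ R) := Submodule.span R
  {v : D.Φt →₀ R |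
    ∃ (z g : Λt) (hz : D.π z = 0) (hg : D.π g ∈ D.Φ),
      v = Finsupp.single ⟨z * g, by rw [D.π_mul, hz, zero_add]; exact hg⟩ (1 : R) -
          D.ν z • Finsupp.single ⟨g, hg⟩ (1 : R)}

abbrev Q := (D.Φt →₀ R) ⧸ D.Rel

-- `X_{α̃}`, extended by `0` off the lifted roots so that no membership proofs are carried along
open scoped Classical in
def x (g : Λt) : D.Q :=
  if hg : D.π g ∈ D.Φ then Submodule.Quotient.mk (Finsupp.single ⟨g, hg⟩ 1) else 0

lemma x_of_mem {g : Λt} (hg : D.π g ∈ D.Φ) :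
    D.x g = Submodule.Quotient.mk (Finsupp.single ⟨g, hg⟩ 1) :=
  dif_pos hg

lemma x_of_not_mem {g : Λt} (hg : D.π g ∉ D.Φ) : D.x g = 0 :=
  dif_neg hg

lemma x_mul_of_π_eq_zero {z : Λt} (hz : D.π z = 0) (g : Λt) : D.x (z * g) = D.ν z • D.x g := by
  have hzg : D.π (z * g) = D.π g := by rw [D.π_mul, hz, zero_add]
  by_cases hg : D.π g ∈ D.Φ
  · rw [D.x_of_mem hg, D.x_of_mem (hzg ▸ hg), ← Submodule.Quotient.mk_smul, ← sub_eq_zero,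
      ← Submodule.Quotient.mk_sub, Submodule.Quotient.mk_eq_zero]
    exact Submodule.subset_span ⟨z, g, hz, hg, rfl⟩
  · rw [D.x_of_not_mem hg, D.x_of_not_mem (hzg ▸ hg), smul_zero]

variable {M : Type} [AddCommGroup M] [Module R M]

lemma Rel_le_ker {v : Λt → M} (hv : ∀ z g, D.π z = 0 → D.π g ∈ D.Φ → v (z * g) = D.ν z • v g) :
    D.Rel ≤ LinearMap.ker (Finsupp.lift M R D.Φt fun s => v s.1) := by
  refine Submodule.span_le.mpr ?_
  rintro _ ⟨z, g, hz, hg, rfl⟩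
  simp only [SetLike.mem_coe, LinearMap.mem_ker, map_sub, map_smul, Finsupp.lift_apply]
  simp [Finsupp.sum_single_index, hv z g hz hg]

def descend (v : Λt → M) (hv : ∀ z g, D.π z = 0 → D.π g ∈ D.Φ → v (z * g) = D.ν z • v g) :
    D.Q →ₗ[R] M :=
  D.Rel.liftQ _ (D.Rel_le_ker hv)

lemma descend_x {v : Λt → M} (hv) {g : Λt} (hg : D.π g ∈ D.Φ) : D.descend v hv (D.x g) = v g := by
  rw [descend, D.x_of_mem hg, Submodule.liftQ_apply]
  simp [Finsupp.lift_apply]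

lemma Q_hom_ext {f f' : D.Q →ₗ[R] M} (h : ∀ g, D.π g ∈ D.Φ → f (D.x g) = f' (D.x g)) : f = f' := by
  refine Submodule.linearMap_qext _ (Finsupp.lhom_ext' fun s => LinearMap.ext_ring ?_)
  simpa [D.x_of_mem s.2] using h s.1 s.2

lemma span_x : Submodule.span R (Set.range fun s : D.Φt => D.x s) = ⊤ := by
  have : (fun s : D.Φt => D.x s) = D.Rel.mkQ ∘ Finsupp.basisSingleOne := by
    ext1 s; simp [D.x_of_mem s.2]
  rw [this, Set.range_comp, Submodule.span_image, Finsupp.basisSingleOne.span_eq,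
    Submodule.map_top, Submodule.range_mkQ]


open TensorProduct (evalPairing)

local notation "𝔱" => R ⊗[ℤ] (Λ →+ ℤ)

def chk (α : Λ) : 𝔱 := 1 ⊗ₜ D.B α

lemma chk_add (α β : Λ) : D.chk (α + β) = D.chk α + D.chk β := by
  simp [chk, TensorProduct.tmul_add]

lemma chk_neg (α : Λ) : D.chk (-α) = -D.chk α := by
  simp [chk, TensorProduct.tmul_neg]

lemma evalPairing_chk (α β : Λ) : evalPairing R Λ β (D.chk α) = D.B α β := by
  simp [chk]

abbrev H := 𝔱 × D.Q

def X (g : Λt) : D.H := (0, D.x g)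

def coroot (α : Λ) : D.H := (D.chk α, 0)

lemma coroot_add (α β : Λ) : D.coroot (α + β) = D.coroot α + D.coroot β := by
  simp [coroot, chk_add]

lemma coroot_neg (α : Λ) : D.coroot (-α) = -D.coroot α := by
  simp [coroot, chk_neg]

lemma X_of_not_mem {g : Λt} (hg : D.π g ∉ D.Φ) : D.X g = 0 := by
  simp [X, D.x_of_not_mem hg]

lemma X_mul_of_π_eq_zero {z : Λt} (hz : D.π z = 0) (g : Λt) : D.X (z * g) = D.ν z • D.X g := by
  simp [X, D.x_mul_of_π_eq_zero hz]

lemma X_eq_smul_of_π_eq {g f : Λt} (h : D.π g = D.π f) : D.X g = D.ν (g * f⁻¹) • D.X f := by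
  rw [← D.X_mul_of_π_eq_zero (by rw [D.π_mul, D.π_inv, h, add_neg_cancel]), inv_mul_cancel_right]

lemma X_c_zpow_mul (n : ℤ) (g : Λt) : D.X (D.c ^ n * g) = ((D.ζ ^ n : Rˣ) : R) • D.X g := by
  rw [D.X_mul_of_π_eq_zero (D.π_c_zpow n), D.ν_c_zpow]

lemma X_mul_swap (g h : Λt) :
    D.X (h * g) = ((D.ζ ^ D.E (D.π h) (D.π g) : Rˣ) : R) • D.X (g * h) := by
  rw [D.mul_eq_c_zpow_mul h g, D.X_c_zpow_mul]

def act : 𝔱 →ₗ[R] D.Q →ₗ[R] D.Q :=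
  (D.descend (fun g => (evalPairing R Λ (D.π g)).smulRight (D.x g)) fun z g hz _ => by
    ext t
    simp [D.π_mul, hz, D.x_mul_of_π_eq_zero hz, smul_comm (D.ν z)]).flip

lemma act_x (t : 𝔱) (g : Λt) : D.act t (D.x g) = evalPairing R Λ (D.π g) t • D.x g := by
  by_cases hg : D.π g ∈ D.Φ
  · simp [act, D.descend_x _ hg]
  · simp [D.x_of_not_mem hg]

open scoped Classical in
def xBracket (g h : Λt) : D.H :=
  if D.π g + D.π h = 0 then -D.ν (g * h) • D.coroot (D.π g)
  else (D.ε (D.π g) (D.π h) : R) • D.X (g * h)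

lemma xBracket_of_add_eq_zero {g h : Λt} (h0 : D.π g + D.π h = 0) :
    D.xBracket g h = -D.ν (g * h) • D.coroot (D.π g) := by
  simp [xBracket, h0]

lemma xBracket_of_add_ne_zero {g h : Λt} (h0 : D.π g + D.π h ≠ 0) :
    D.xBracket g h = (D.ε (D.π g) (D.π h) : R) • D.X (g * h) := by
  simp [xBracket, h0]

lemma xBracket_eq_smul {g h g' h' z : Λt} (hg : D.π g' = D.π g) (hh : D.π h' = D.π h)
    (hz : D.π z = 0) (hmul : g' * h' = z * (g * h)) :
    D.xBracket g' h' = D.ν z • D.xBracket g h := by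
  by_cases h0 : D.π g + D.π h = 0
  · have hgh : D.π (g * h) = 0 := by rw [D.π_mul, h0]
    rw [D.xBracket_of_add_eq_zero h0, D.xBracket_of_add_eq_zero (hg ▸ hh ▸ h0), hg, hmul,
      D.ν_mul hz hgh, smul_smul, mul_neg]
  · rw [D.xBracket_of_add_ne_zero h0, D.xBracket_of_add_ne_zero (hg ▸ hh ▸ h0), hg, hh, hmul,
      D.X_mul_of_π_eq_zero hz, smul_comm]

lemma xBracket_mul_left {z : Λt} (hz : D.π z = 0) (g h : Λt) :
    D.xBracket (z * g) h = D.ν z • D.xBracket g h :=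
  D.xBracket_eq_smul (by rw [D.π_mul, hz, zero_add]) rfl hz (mul_assoc _ _ _)

lemma xBracket_mul_right {z : Λt} (hz : D.π z = 0) (g h : Λt) :
    D.xBracket g (z * h) = D.ν z • D.xBracket g h :=
  D.xBracket_eq_smul rfl (by rw [D.π_mul, hz, zero_add]) hz
    (by rw [← mul_assoc, ← (D.commute_of_π_eq_zero hz g).eq, mul_assoc])

def bracketQ : D.Q →ₗ[R] D.Q →ₗ[R] D.H :=
  D.descend (fun g => D.descend (D.xBracket g) fun z h hz _ => D.xBracket_mul_right hz g h)
    fun z g hz _ => D.Q_hom_ext fun h hh => by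
      simp [D.descend_x _ hh, D.xBracket_mul_left hz]

lemma bracketQ_x_x {g h : Λt} (hg : D.π g ∈ D.Φ) (hh : D.π h ∈ D.Φ) :
    D.bracketQ (D.x g) (D.x h) = D.xBracket g h := by
  simp [bracketQ, D.descend_x _ hg, D.descend_x _ hh]

def bracket : D.H →ₗ[R] D.H →ₗ[R] D.H :=
  let A := (D.act.compl₁₂ (LinearMap.fst R 𝔱 D.Q) (LinearMap.snd R 𝔱 D.Q)).compr₂
    (LinearMap.inr R 𝔱 D.Q)
  A - A.flip + D.bracketQ.compl₁₂ (LinearMap.snd R 𝔱 D.Q) (LinearMap.snd R 𝔱 D.Q)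

lemma bracket_apply (p q : D.H) :
    D.bracket p q = (0, D.act p.1 q.2) - (0, D.act q.1 p.2) + D.bracketQ p.2 q.2 := rfl

lemma xBracket_self {g : Λt} (hg : D.π g ∈ D.Φ) : D.xBracket g g = 0 := by
  have hB : D.B (D.π g) (D.π g) = 2 := hg
  rw [D.xBracket_of_add_ne_zero fun h => by have := (add_eq_zero_iff hg hg).mp h; omega,
    D.X_of_not_mem fun h => by rw [D.π_mul, add_mem_Φ_iff hg hg] at h; omega, smul_zero]

lemma xBracket_swap {g h : Λt} (hg : D.π g ∈ D.Φ) (hh : D.π h ∈ D.Φ) :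
    D.xBracket h g = -D.xBracket g h := by
  by_cases h0 : D.π g + D.π h = 0
  · have hgh : D.π (g * h) = 0 := by rw [D.π_mul, h0]
    rw [D.xBracket_of_add_eq_zero h0, D.xBracket_of_add_eq_zero (by rwa [add_comm]),
      D.mul_comm_of_π_mul_eq_zero hgh, eq_neg_of_add_eq_zero_right h0, coroot_neg]
    simp
  rw [D.xBracket_of_add_ne_zero h0, D.xBracket_of_add_ne_zero (by rwa [add_comm]),
    D.X_mul_swap, smul_smul, ← Units.val_mul]
  by_cases hs : D.π g + D.π h ∈ D.Φ
  · rw [D.ε_swap_mul_zpow ((add_mem_Φ_iff hg hh).mp hs), Units.val_neg, neg_smul]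
  · rw [D.X_of_not_mem (by rwa [D.π_mul]), smul_zero, smul_zero, neg_zero]

lemma xBracket_of_nonneg {g h : Λt} (hg : D.π g ∈ D.Φ) (hh : D.π h ∈ D.Φ)
    (hb : 0 ≤ D.B (D.π g) (D.π h)) : D.xBracket g h = 0 := by
  rw [D.xBracket_of_add_ne_zero fun h0 => by have := (add_eq_zero_iff hg hh).mp h0; omega,
    D.X_of_not_mem fun hs => by rw [D.π_mul, add_mem_Φ_iff hg hh] at hs; omega, smul_zero]

lemma bracketQ_isAlt : D.bracketQ.IsAlt := by
  refine LinearMap.isAlt_of_span D.span_x ?_ ?_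
  · rintro _ ⟨⟨g, hg⟩, rfl⟩
    rw [D.bracketQ_x_x hg hg, D.xBracket_self hg]
  · rintro _ ⟨⟨g, hg⟩, rfl⟩ _ ⟨⟨h, hh⟩, rfl⟩
    rw [D.bracketQ_x_x hg hh, D.bracketQ_x_x hh hg, D.xBracket_swap hh hg]

lemma bracket_isAlt : D.bracket.IsAlt := fun p => by
  rw [bracket_apply, sub_self, zero_add, D.bracketQ_isAlt]

lemma bracket_T_T (t t' : 𝔱) : D.bracket (t, 0) (t', 0) = 0 := by
  simp [bracket_apply]

lemma bracket_T_X (t : 𝔱) (g : Λt) :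
    D.bracket (t, 0) (D.X g) = evalPairing R Λ (D.π g) t • D.X g := by
  simp [bracket_apply, X, act_x]

lemma bracket_X_T (g : Λt) (t : 𝔱) :
    D.bracket (D.X g) (t, 0) = -(evalPairing R Λ (D.π g) t • D.X g) := by
  rw [← D.bracket_isAlt.neg, bracket_T_X]

lemma bracket_X_X {g h : Λt} (hg : D.π g ∈ D.Φ) (hh : D.π h ∈ D.Φ) :
    D.bracket (D.X g) (D.X h) = D.xBracket g h := by
  simp [bracket_apply, X, D.bracketQ_x_x hg hh]

lemma bracket_coroot_X (α : Λ) (g : Λt) :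
    D.bracket (D.coroot α) (D.X g) = (D.B α (D.π g) : R) • D.X g := by
  rw [coroot, bracket_T_X, evalPairing_chk]

lemma bracket_X_coroot (g : Λt) (β : Λ) :
    D.bracket (D.X g) (D.coroot β) = -((D.B β (D.π g) : R) • D.X g) := by
  rw [coroot, bracket_X_T, evalPairing_chk]

lemma bracket_T_xBracket (t : 𝔱) (g h : Λt) :
    D.bracket (t, 0) (D.xBracket g h) = evalPairing R Λ (D.π g + D.π h) t • D.xBracket g h := by
  by_cases h0 : D.π g + D.π h = 0
  · rw [D.xBracket_of_add_eq_zero h0, h0, map_zero, coroot, map_smul, bracket_T_T]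
    simp
  · rw [D.xBracket_of_add_ne_zero h0, map_smul, bracket_T_X, D.π_mul, smul_comm]

lemma jacobiator_T_T_X (t t' : 𝔱) (g : Λt) :
    LinearMap.jacobiator D.bracket (t, 0) (t', 0) (D.X g) = 0 := by
  simp only [LinearMap.jacobiator, bracket_T_T, bracket_T_X, bracket_X_T, map_smul, map_neg,
    map_zero, smul_smul, mul_comm (evalPairing R Λ (D.π g) t)]
  abel

lemma jacobiator_T_X_X (t : 𝔱) {g h : Λt} (hg : D.π g ∈ D.Φ) (hh : D.π h ∈ D.Φ) :
    LinearMap.jacobiator D.bracket (t, 0) (D.X g) (D.X h) = 0 := by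
  simp only [LinearMap.jacobiator, D.bracket_X_X hg hh, D.bracket_X_X hh hg, D.xBracket_swap hg hh,
    bracket_T_xBracket, bracket_X_T, bracket_T_X, map_smul, map_neg, map_add, LinearMap.add_apply]
  module

lemma bracket_X_bracket_X_X_of_add_eq_zero {f g h : Λt} (hg : D.π g ∈ D.Φ) (hh : D.π h ∈ D.Φ)
    (h0 : D.π g + D.π h = 0) :
    D.bracket (D.X f) (D.bracket (D.X g) (D.X h)) =
      (D.ν (g * h) * D.B (D.π g) (D.π f)) • D.X f := by
  rw [D.bracket_X_X hg hh, D.xBracket_of_add_eq_zero h0, map_smul, bracket_X_coroot]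
  module

lemma bracket_X_bracket_X_X_of_add_mem {f g h : Λt} (hf : D.π f ∈ D.Φ) (hg : D.π g ∈ D.Φ)
    (hh : D.π h ∈ D.Φ) (hgh : D.π g + D.π h ∈ D.Φ) (hsum : D.π f + D.π g + D.π h ≠ 0) :
    D.bracket (D.X f) (D.bracket (D.X g) (D.X h)) =
      ((D.ε (D.π g) (D.π h) : R) * D.ε (D.π f) (D.π g + D.π h)) • D.X (f * (g * h)) := by
  rw [D.bracket_X_X hg hh, D.xBracket_of_add_ne_zero (ne_zero_of_mem_Φ hgh), map_smul,
    D.bracket_X_X hf (by rwa [D.π_mul]),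
    D.xBracket_of_add_ne_zero (by rwa [D.π_mul, ← add_assoc]), D.π_mul, smul_smul]

lemma bracket_X_bracket_X_X_of_not_mem {f g h : Λt} (hg : D.π g ∈ D.Φ) (hh : D.π h ∈ D.Φ)
    (h0 : D.π g + D.π h ≠ 0) (hgh : D.π g + D.π h ∉ D.Φ) :
    D.bracket (D.X f) (D.bracket (D.X g) (D.X h)) = 0 := by
  rw [D.bracket_X_X hg hh, D.xBracket_of_add_ne_zero h0,
    D.X_of_not_mem (g := g * h) (by rwa [D.π_mul]), smul_zero, map_zero]

lemma bracket_X_bracket_X_X_of_add_add_not_mem {f g h : Λt} (hf : D.π f ∈ D.Φ)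
    (hg : D.π g ∈ D.Φ) (hh : D.π h ∈ D.Φ) (h0 : D.π g + D.π h ≠ 0)
    (hsum : D.π f + D.π g + D.π h ≠ 0)
    (hs : D.π f + D.π g + D.π h ∉ D.Φ) :
    D.bracket (D.X f) (D.bracket (D.X g) (D.X h)) = 0 := by
  by_cases hgh : D.π g + D.π h ∈ D.Φ
  · rw [D.bracket_X_bracket_X_X_of_add_mem hf hg hh hgh hsum,
      D.X_of_not_mem (by rwa [D.π_mul, D.π_mul, ← add_assoc]), smul_zero]
  · exact D.bracket_X_bracket_X_X_of_not_mem hg hh h0 hgh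

lemma jacobiator_X_of_add_add_eq_zero {f g h : Λt} (hf : D.π f ∈ D.Φ) (hg : D.π g ∈ D.Φ)
    (hh : D.π h ∈ D.Φ) (hsum : D.π f + D.π g + D.π h = 0) :
    LinearMap.jacobiator D.bracket (D.X f) (D.X g) (D.X h) = 0 := by
  have term : ∀ {f g h : Λt}, D.π f ∈ D.Φ → D.π g ∈ D.Φ → D.π h ∈ D.Φ →
      D.π f + D.π g + D.π h = 0 → D.bracket (D.X f) (D.bracket (D.X g) (D.X h)) =
        -((D.ε (D.π g) (D.π h) : R) * D.ν (f * (g * h))) • D.coroot (D.π f) := by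
    intro f g h hf hg hh hsum
    have hgh : D.π g + D.π h = -D.π f := eq_neg_of_add_eq_zero_right (by rwa [← add_assoc])
    rw [D.bracket_X_X hg hh,
      D.xBracket_of_add_ne_zero (by simpa [hgh] using ne_zero_of_mem_Φ hf), map_smul,
      D.bracket_X_X hf (by rw [D.π_mul, hgh]; exact neg_mem_Φ hf),
      D.xBracket_of_add_eq_zero (by rw [D.π_mul, ← add_assoc, hsum]), smul_smul, mul_neg]
  have hsum₂ : D.π g + D.π h + D.π f = 0 := by rw [← hsum]; abel
  have hsum₃ : D.π h + D.π f + D.π g = 0 := by rw [← hsum]; abel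
  have hfgh : D.π (f * g * h) = 0 := by rw [D.π_mul, D.π_mul, hsum]
  have hν₂ : D.ν (g * (h * f)) = D.ν (f * (g * h)) := by
    rw [← mul_assoc, D.mul_comm_of_π_mul_eq_zero (by rwa [← mul_assoc])]
  have hν₃ : D.ν (h * (f * g)) = D.ν (f * (g * h)) := by
    rw [D.mul_comm_of_π_mul_eq_zero hfgh, mul_assoc]
  have hcoroot : D.coroot (D.π f) + D.coroot (D.π g) + D.coroot (D.π h) = 0 := by
    rw [← coroot_add, ← coroot_add, hsum, coroot, chk]
    simp
  rw [LinearMap.jacobiator, term hf hg hh hsum, term hg hh hf hsum₂, term hh hf hg hsum₃, hν₂,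
    hν₃, D.ε_eq_of_add_add_eq_zero hh hf hg hsum₃, D.ε_eq_of_add_add_eq_zero hg hh hf hsum₂]
  linear_combination (norm := module)
    (-((D.ε (D.π g) (D.π h) : R) * D.ν (f * (g * h)))) • hcoroot

lemma jacobiator_X_of_add_eq_zero_of_pairing_eq_zero {f g h : Λt} (hf : D.π f ∈ D.Φ)
    (hg : D.π g ∈ D.Φ) (hh : D.π h ∈ D.Φ) (h0 : D.π g + D.π h = 0)
    (hb : D.B (D.π f) (D.π g) = 0) :
    LinearMap.jacobiator D.bracket (D.X f) (D.X g) (D.X h) = 0 := by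
  have hγ : D.π h = -D.π g := eq_neg_of_add_eq_zero_right h0
  rw [LinearMap.jacobiator, D.bracket_X_bracket_X_X_of_add_eq_zero hg hh h0,
    D.bracket_X_X hh hf,
    D.xBracket_of_nonneg hh hf (by rw [hγ, D.B_symm]; simp [hb]), D.bracket_X_X hf hg,
    D.xBracket_of_nonneg hf hg hb.ge, D.B_symm, hb]
  simp

lemma jacobiator_X_of_add_eq_zero_of_pairing_eq_neg_one {f g h : Λt} (hf : D.π f ∈ D.Φ)
    (hg : D.π g ∈ D.Φ) (hh : D.π h ∈ D.Φ) (h0 : D.π g + D.π h = 0)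
    (hb : D.B (D.π f) (D.π g) = -1) :
    LinearMap.jacobiator D.bracket (D.X f) (D.X g) (D.X h) = 0 := by
  have hγ : D.π h = -D.π g := eq_neg_of_add_eq_zero_right h0
  have hgh : D.π (g * h) = 0 := by rw [D.π_mul, h0]
  have hmul : h * (f * g) = D.c ^ D.E (D.π f) (D.π g) * ((g * h) * f) := by
    rw [D.mul_eq_c_zpow_mul f g, ← mul_assoc h, ← D.c_zpow_mul_comm,
      ← D.mul_comm_of_π_mul_eq_zero hgh]
    simp only [mul_assoc]
  have hsum : D.π h + D.π f + D.π g = D.π f := by rw [hγ]; abel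
  have hU : (D.ε (D.π f) (D.π g) : R) * D.ε (-D.π g) (D.π f + D.π g) *
      (D.ζ ^ D.E (D.π f) (D.π g) : Rˣ) = 1 := by
    rw [← Units.val_mul, ← Units.val_mul, D.ε_mul_ε_mul_zpow_eq_one hg hb, Units.val_one]
  rw [LinearMap.jacobiator, D.bracket_X_bracket_X_X_of_add_eq_zero hg hh h0,
    D.bracket_X_X hh hf,
    D.xBracket_of_nonneg hh hf (by rw [hγ, D.B_symm]; simp [hb]), map_zero,
    D.bracket_X_bracket_X_X_of_add_mem hh hf hg ((add_mem_Φ_iff hf hg).mpr hb)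
      (by rw [hsum]; exact ne_zero_of_mem_Φ hf),
    hmul, D.X_c_zpow_mul, D.X_mul_of_π_eq_zero hgh, hγ, D.B_symm (D.π g), hb]
  linear_combination (norm := module) hU • (D.ν (g * h) • D.X f)

lemma jacobiator_X_of_add_eq_zero_of_pairing_eq_neg_two {f g h : Λt} (hf : D.π f ∈ D.Φ)
    (hg : D.π g ∈ D.Φ) (hh : D.π h ∈ D.Φ) (h0 : D.π g + D.π h = 0)
    (hb : D.B (D.π f) (D.π g) = -2) :
    LinearMap.jacobiator D.bracket (D.X f) (D.X g) (D.X h) = 0 := by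
  have hfg : D.π f + D.π g = 0 := (add_eq_zero_iff hf hg).mpr hb
  have hhf : D.π h = D.π f := by
    rw [eq_neg_of_add_eq_zero_right h0, eq_neg_of_add_eq_zero_left hfg]
  have hgh : D.π (g * h) = 0 := by rw [D.π_mul, h0]
  have hν : D.ν (f * g) * D.ν (h * f⁻¹) = D.ν (g * h) := by
    rw [← D.ν_mul (by rwa [D.π_mul]) (by rw [D.π_mul, D.π_inv, hhf, add_neg_cancel])]
    congr 1
    calc f * g * (h * f⁻¹) = f * (g * h) * f⁻¹ := by group
      _ = g * h := by rw [← (D.commute_of_π_eq_zero hgh f).eq]; group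
  have hff : D.B (D.π f) (D.π f) = 2 := hf
  rw [LinearMap.jacobiator, D.bracket_X_bracket_X_X_of_add_eq_zero hg hh h0,
    D.bracket_X_X hh hf,
    D.xBracket_of_nonneg hh hf (by rw [hhf, hff]; norm_num), map_zero,
    D.bracket_X_bracket_X_X_of_add_eq_zero hf hg hfg, D.X_eq_smul_of_π_eq hhf, hhf, hff,
    D.B_symm (D.π g), hb, ← hν]
  module

lemma jacobiator_X_of_add_eq_zero {f g h : Λt} (hf : D.π f ∈ D.Φ) (hg : D.π g ∈ D.Φ)
    (hh : D.π h ∈ D.Φ) (h0 : D.π g + D.π h = 0) :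
    LinearMap.jacobiator D.bracket (D.X f) (D.X g) (D.X h) = 0 := by
  -- swapping `g` and `h` negates both the Jacobiator and the pairing
  wlog hb : D.B (D.π f) (D.π g) ≤ 0 generalizing g h with H
  · have := H hh hg (by rwa [add_comm]) (by
      rw [eq_neg_of_add_eq_zero_right h0, map_neg]; omega)
    rwa [D.bracket_isAlt.jacobiator_swap, neg_eq_zero] at this
  have := neg_two_le hf hg
  obtain hb | hb | hb : D.B (D.π f) (D.π g) = -2 ∨ D.B (D.π f) (D.π g) = -1 ∨
      D.B (D.π f) (D.π g) = 0 := by omega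
  · exact D.jacobiator_X_of_add_eq_zero_of_pairing_eq_neg_two hf hg hh h0 hb
  · exact D.jacobiator_X_of_add_eq_zero_of_pairing_eq_neg_one hf hg hh h0 hb
  · exact D.jacobiator_X_of_add_eq_zero_of_pairing_eq_zero hf hg hh h0 hb

lemma jacobiator_X_of_pairings {f g h : Λt} (hf : D.π f ∈ D.Φ) (hg : D.π g ∈ D.Φ)
    (hh : D.π h ∈ D.Φ) (hab : D.B (D.π f) (D.π g) = 0) (hbc : D.B (D.π g) (D.π h) = -1)
    (hca : D.B (D.π h) (D.π f) = -1) (hs : D.π f + D.π g + D.π h ∈ D.Φ) :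
    LinearMap.jacobiator D.bracket (D.X f) (D.X g) (D.X h) = 0 := by
  have hmul : g * (h * f) =
      D.c ^ D.E (D.π h) (D.π f) * (D.c ^ D.E (D.π g) (D.π f) * (f * (g * h))) := by
    rw [D.mul_eq_c_zpow_mul h f, ← mul_assoc g, ← D.c_zpow_mul_comm, mul_assoc,
      ← mul_assoc g f, D.mul_eq_c_zpow_mul g f]
    simp only [mul_assoc]
  have hU : (D.ε (D.π h) (D.π f) : R) * D.ε (D.π g) (D.π h + D.π f) *
      (D.ζ ^ D.E (D.π h) (D.π f) : Rˣ) * (D.ζ ^ D.E (D.π g) (D.π f) : Rˣ) =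
      -((D.ε (D.π g) (D.π h) : R) * D.ε (D.π f) (D.π g + D.π h)) := by
    simp only [← Units.val_mul, ← Units.val_neg, D.ε_mul_ε_mul_zpow_mul_zpow hab hca]
  rw [LinearMap.jacobiator,
    D.bracket_X_bracket_X_X_of_add_mem hf hg hh ((add_mem_Φ_iff hg hh).mpr hbc)
      (ne_zero_of_mem_Φ hs),
    D.bracket_X_bracket_X_X_of_add_mem hg hh hf ((add_mem_Φ_iff hh hf).mpr hca)
      (by rw [show D.π g + D.π h + D.π f = D.π f + D.π g + D.π h by abel]
          exact ne_zero_of_mem_Φ hs),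
    D.bracket_X_X hf hg, D.xBracket_of_nonneg hf hg hab.ge, map_zero, hmul, D.X_c_zpow_mul,
    D.X_c_zpow_mul]
  linear_combination (norm := module) hU • D.X (f * (g * h))

lemma jacobiator_X {f g h : Λt} (hf : D.π f ∈ D.Φ) (hg : D.π g ∈ D.Φ) (hh : D.π h ∈ D.Φ) :
    LinearMap.jacobiator D.bracket (D.X f) (D.X g) (D.X h) = 0 := by
  have rot₁ : D.π g + D.π h + D.π f = D.π f + D.π g + D.π h := by abel
  have rot₂ : D.π h + D.π f + D.π g = D.π f + D.π g + D.π h := by abel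
  by_cases hsum : D.π f + D.π g + D.π h = 0
  · exact D.jacobiator_X_of_add_add_eq_zero hf hg hh hsum
  by_cases hgh : D.π g + D.π h = 0
  · exact D.jacobiator_X_of_add_eq_zero hf hg hh hgh
  by_cases hhf : D.π h + D.π f = 0
  · rw [LinearMap.jacobiator_rotate]
    exact D.jacobiator_X_of_add_eq_zero hg hh hf hhf
  by_cases hfg : D.π f + D.π g = 0
  · rw [← LinearMap.jacobiator_rotate _ (D.X h)]
    exact D.jacobiator_X_of_add_eq_zero hh hf hg hfg
  by_cases hs : D.π f + D.π g + D.π h ∈ D.Φ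
  · rcases D.pairings_of_add_add_mem hf hg hh hfg hgh hhf hs with
      ⟨h₁, h₂, h₃⟩ | ⟨h₁, h₂, h₃⟩ | ⟨h₁, h₂, h₃⟩
    · exact D.jacobiator_X_of_pairings hf hg hh h₁ h₂ h₃ hs
    · rw [LinearMap.jacobiator_rotate]
      exact D.jacobiator_X_of_pairings hg hh hf h₁ h₂ h₃ (rot₁ ▸ hs)
    · rw [← LinearMap.jacobiator_rotate _ (D.X h)]
      exact D.jacobiator_X_of_pairings hh hf hg h₁ h₂ h₃ (rot₂ ▸ hs)
  · rw [LinearMap.jacobiator, D.bracket_X_bracket_X_X_of_add_add_not_mem hf hg hh hgh hsum hs,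
      D.bracket_X_bracket_X_X_of_add_add_not_mem hg hh hf hhf (rot₁ ▸ hsum) (rot₁ ▸ hs),
      D.bracket_X_bracket_X_X_of_add_add_not_mem hh hf hg hfg (rot₂ ▸ hsum) (rot₂ ▸ hs),
      add_zero, add_zero]

def generators : Set D.H :=
  Set.range (fun t : 𝔱 => (t, (0 : D.Q))) ∪ Set.range fun s : D.Φt => D.X s

lemma span_generators : Submodule.span R D.generators = ⊤ := by
  have hQ : Submodule.map (LinearMap.inr R 𝔱 D.Q) ⊤ ≤ Submodule.span R D.generators := by
    rw [← D.span_x, ← Submodule.span_image]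
    refine Submodule.span_mono ?_
    rintro _ ⟨_, ⟨s, rfl⟩, rfl⟩
    exact Or.inr ⟨s, rfl⟩
  rw [Submodule.eq_top_iff']
  rintro ⟨t, q⟩
  rw [show ((t, q) : D.H) = (t, 0) + (0, q) by simp]
  exact Submodule.add_mem _ (Submodule.subset_span (Or.inl ⟨t, rfl⟩))
    (hQ ⟨q, Submodule.mem_top, rfl⟩)

lemma jacobiator_bracket (p q r : D.H) : LinearMap.jacobiator D.bracket p q r = 0 := by
  refine LinearMap.jacobiator_eq_zero_of_span _ D.span_generators ?_ p q r
  rintro _ (⟨t, rfl⟩ | ⟨⟨f, hf⟩, rfl⟩) _ (⟨t', rfl⟩ | ⟨⟨g, hg⟩, rfl⟩) _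
    (⟨t'', rfl⟩ | ⟨⟨h, hh⟩, rfl⟩)
  · simp [LinearMap.jacobiator, bracket_T_T]
  · exact D.jacobiator_T_T_X t t' h
  · rw [← LinearMap.jacobiator_rotate]
    exact D.jacobiator_T_T_X t'' t g
  · exact D.jacobiator_T_X_X t hg hh
  · rw [LinearMap.jacobiator_rotate]
    exact D.jacobiator_T_T_X t' t'' f
  · rw [LinearMap.jacobiator_rotate]
    exact D.jacobiator_T_X_X t' hh hf
  · rw [← LinearMap.jacobiator_rotate]
    exact D.jacobiator_T_X_X t'' hf hg
  · exact D.jacobiator_X hf hg hh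

end TwistedRootDatum

end

/-- Given an `E₈`-type simply-laced even lattice `(Λ, B)` with roots
`Φ = {α : B(α,α) = 2}`, a fixed-point-free isometry `w` of order 3 (so `w²γ + wγ + γ = 0`),
a base ring `R` in which `2·3·5·7` is invertible with a primitive cube root of unity `ζ`,
and a central extension `1 → μ₃ → Λ̃ → Λ → 1` with commutator `ζ^{B((1−w)α, β)}`,
the bracket defined on `𝔥 = 𝔱 ⊕ 𝔥₁` (with `𝔱 = Hom(Λ,ℤ) ⊗ R` and `𝔥₁` the quotient of the
free `R`-module on `X_{α̃}`, `α̃ ∈ Φ̃ = π⁻¹(Φ)`, by the relations `X_{zα̃} = z·X_{α̃}` for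
`z ∈ μ₃`) by
  `[𝔱, 𝔱] = 0`, `[α̌, X_{β̃}] = B(α,β)·X_{β̃} = −[X_{β̃}, α̌]`,
  `[X_{α̃}, X_{β̃}] = −(α̃β̃)·α̌` if `α + β = 0`,
  `[X_{α̃}, X_{β̃}] = (−1)^{B(α,wβ)}·ζ^{B((1−w)α,β)}·X_{α̃β̃}` if `α + β ∈ Φ`,
  `[X_{α̃}, X_{β̃}] = 0` otherwise,
is well defined (it respects the relations), is alternating, and satisfies the Jacobi
identity; thus `𝔥` is a Lie algebra over `R`. -/
theorem stmt_0
    (Λ : Type) [AddCommGroup Λ]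
    (B : Λ → Λ → ℤ)
    (hB_add_left : ∀ x y z : Λ, B (x + y) z = B x z + B y z)
    (hB_add_right : ∀ x y z : Λ, B x (y + z) = B x y + B x z)
    (hB_symm : ∀ x y : Λ, B x y = B y x)
    (hB_pos : ∀ x : Λ, x ≠ 0 → 0 < B x x)
    (Φ : Set Λ)
    (hΦ : Φ = {α : Λ | B α α = 2})
    (h_laced : ∀ α ∈ Φ, ∀ β ∈ Φ, ((α + β) ∈ Φ ↔ B α β = -1))
    (w : Λ →+ Λ)
    (hwB : ∀ x y : Λ, B (w x) (w y) = B x y)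
    (hw_ell : ∀ γ : Λ, w (w γ) + w γ + γ = 0)
    (R : Type) [CommRing R]
    (ζ : Rˣ) (hζ : 1 + (ζ : R) + (ζ : R) ^ 2 = 0)
    (Λt : Type) [Group Λt]
    (π : Λt → Λ)
    (hπ_mul : ∀ a b : Λt, π (a * b) = π a + π b)
    (c : Λt) (hc_ker : π c = 0)
    (hc_order : c ^ 3 = 1)
    (h_ker : ∀ g : Λt, π g = 0 → g = 1 ∨ g = c ∨ g = c ^ 2)
    (ν : Λt → R)
    (hν_one : ν 1 = 1) (hν_c : ν c = (ζ : R)) (hν_c2 : ν (c ^ 2) = (ζ : R) ^ 2)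
    (h_comm : ∀ a b : Λt, a * b * a⁻¹ * b⁻¹ = c ^ (B (π a - w (π a)) (π b))) :
    -- the Cartan subalgebra 𝔱 = Hom(Λ, ℤ) ⊗ R
    let T := R ⊗[ℤ] (Λ →+ ℤ)
    -- the coroot α̌ = B(α, ·), viewed in 𝔱
    let chk : Λ → T := fun α =>
      (1 : R) ⊗ₜ[ℤ] (AddMonoidHom.mk' (fun x => B α x) (fun x y => hB_add_right α x y))
    -- 𝔥₁: quotient of the free R-module on Φ̃ = π⁻¹(Φ) by the relations X_{zα̃} = z·X_{α̃}
    let Rel : Submodule R ({g : Λt // π g ∈ Φ} →₀ R) := Submodule.span R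
      {v : {g : Λt // π g ∈ Φ} →₀ R |
        ∃ (z g : Λt) (hz : π z = 0) (hg : π g ∈ Φ),
          v = Finsupp.single ⟨z * g, by rw [hπ_mul, hz, zero_add]; exact hg⟩ (1 : R) -
              ν z • Finsupp.single ⟨g, hg⟩ (1 : R)}
    let Q := ({g : Λt // π g ∈ Φ} →₀ R) ⧸ Rel
    -- the image X_{α̃} of a basis vector in 𝔥₁
    let X : (g : Λt) → π g ∈ Φ → Q := fun g hg =>
      Submodule.Quotient.mk (Finsupp.single ⟨g, hg⟩ (1 : R))
    -- 𝔥 = 𝔱 ⊕ 𝔥₁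
    let H := T × Q
    -- there is a well-defined R-bilinear bracket satisfying the defining formulas,
    -- which is alternating and satisfies the Jacobi identity
    ∃ br : H →ₗ[R] H →ₗ[R] H,
      (∀ t t' : T, br (t, 0) (t', 0) = 0) ∧
      (∀ α ∈ Φ, ∀ (g : Λt) (hg : π g ∈ Φ),
          br (chk α, 0) (0, X g hg) = (B α (π g) : R) • ((0 : T), X g hg) ∧
          br ((0 : T), X g hg) (chk α, 0) = -((B α (π g) : R) • ((0 : T), X g hg))) ∧
      (∀ (g g' : Λt) (hg : π g ∈ Φ) (hg' : π g' ∈ Φ),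
          (π g + π g' = 0 →
            br ((0 : T), X g hg) ((0 : T), X g' hg') =
              (-(ν (g * g'))) • (chk (π g), (0 : Q))) ∧
          (∀ hs : π g + π g' ∈ Φ,
            br ((0 : T), X g hg) ((0 : T), X g' hg') =
              ((((-1 : Rˣ) ^ (B (π g) (w (π g'))) *
                  ζ ^ (B (π g - w (π g)) (π g')) : Rˣ) : R)) •
                ((0 : T), X (g * g') (by rw [hπ_mul]; exact hs))) ∧
          (π g + π g' ≠ 0 → (π g + π g') ∉ Φ →
            br ((0 : T), X g hg) ((0 : T), X g' hg') = 0)) ∧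
      (∀ x : H, br x x = 0) ∧
      (∀ x y z : H, br x (br y z) + br y (br z x) + br z (br x y) = 0) := by
  intro T chk Rel Q X H
  subst hΦ
  let D : TwistedRootDatum Λ R Λt :=
    { B := AddMonoidHom.mk' (fun x => AddMonoidHom.mk' (B x) (hB_add_right x))
        fun x y => AddMonoidHom.ext (hB_add_left x y)
      B_symm := hB_symm, B_pos := hB_pos, add_laced := h_laced, w, B_w_w := hwB, w_add := hw_ell,
      ζ, ζ_cube := Units.ext (by push_cast; linear_combination ((ζ : R) - 1) * hζ),
      π, π_mul := hπ_mul, c, π_c := hc_ker, c_cube := hc_order, ker := h_ker, ν,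
      ν_one := hν_one, ν_c := hν_c, ν_c_sq := hν_c2, commutator := h_comm }
  have hX : ∀ g hg, X g hg = D.x g := fun g hg => (D.x_of_mem hg).symm
  refine ⟨D.bracket, D.bracket_T_T, fun α _ g hg => ?_, fun g g' hg hg' =>
    ⟨fun h0 => ?_, fun hs => ?_, fun h0 hs => ?_⟩, D.bracket_isAlt, D.jacobiator_bracket⟩
  · rw [hX]
    exact ⟨D.bracket_coroot_X α g, D.bracket_X_coroot g α⟩
  · rw [hX, hX]
    exact (D.bracket_X_X hg hg').trans (D.xBracket_of_add_eq_zero h0)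
  · rw [hX, hX, hX]
    refine (D.bracket_X_X hg hg').trans ((D.xBracket_of_add_ne_zero ?_).trans ?_)
    · exact D.ne_zero_of_mem_Φ hs
    · rw [D.ε_eq]
      rfl
  · rw [hX, hX]
    refine (D.bracket_X_X hg hg').trans ((D.xBracket_of_add_ne_zero h0).trans ?_)
    rw [D.X_of_not_mem (by rwa [D.π_mul]), smul_zero]
    rfl
end

section
/- If α, β ∈ Λ satisfy B(α, β) = −1 (as holds whenever α, β and α + β are all roots of a simply-laced root lattice such as E₈), then (−1)^{B(α, wβ)} + (−1)^{B(wα, β)} = 0; equivalently, B(α, wβ) + B(wα, β) is odd. -/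
/-!
Substituting `w² α = -w α - α` into `B (w² α) (w β) = B (w α) β` gives
`B (α, w β) + B (w α, β) = -B (α, β) = 1`, so the two exponents have opposite parity.
-/

theorem form_apply_map_add_form_map_apply {Λ G : Type*} [AddCommGroup Λ] [AddCommGroup G]
    (B : Λ → Λ → G) (hB_add_left : ∀ x y z : Λ, B (x + y) z = B x z + B y z) (w : Λ →+ Λ)
    (hwB : ∀ x y : Λ, B (w x) (w y) = B x y) (hw_ell : ∀ x : Λ, w (w x) + w x + x = 0)
    (x y : Λ) : B x (w y) + B (w x) y = -B x y := by
  have hB_neg_left (u z : Λ) : B (-u) z = -B u z :=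
    map_neg (AddMonoidHom.mk' (B · z) fun a b => hB_add_left a b z) u
  have hw2 : w (w x) = -(w x + x) := eq_neg_of_add_eq_zero_left (by rw [← add_assoc, hw_ell])
  calc B x (w y) + B (w x) y = B x (w y) + B (w (w x)) (w y) := by rw [hwB]
    _ = -B x y := by rw [hw2, hB_neg_left, hB_add_left, hwB]; abel

theorem neg_one_zpow_add_neg_one_zpow_of_odd {a b : ℤ} (h : Odd (a + b)) :
    (((-1 : ℤˣ) ^ a : ℤˣ) : ℤ) + (((-1 : ℤˣ) ^ b : ℤˣ) : ℤ) = 0 := by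
  have hb : (-1 : ℤˣ) ^ b = -(-1 : ℤˣ) ^ a := by
    have hab : (-1 : ℤˣ) ^ a * (-1) ^ b = -1 := by rw [← zpow_add, h.neg_one_zpow]
    calc (-1 : ℤˣ) ^ b = (-1) ^ a * ((-1) ^ a * (-1) ^ b) := by
          rw [← mul_assoc, Int.units_mul_self, one_mul]
      _ = -(-1) ^ a := by rw [hab, mul_neg_one]
  rw [hb, Units.val_neg, add_neg_cancel]

theorem stmt_1_general (Λ : Type*) [AddCommGroup Λ] (B : Λ → Λ → ℤ)
    (hB_add_left : ∀ x y z : Λ, B (x + y) z = B x z + B y z)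
    (w : Λ →+ Λ)
    (hwB : ∀ x y : Λ, B (w x) (w y) = B x y)
    (hw_ell : ∀ x : Λ, w (w x) + w x + x = 0)
    (α β : Λ) (hαβ : B α β = -1) :
    (((-1 : ℤˣ) ^ (B α (w β)) : ℤˣ) : ℤ) + (((-1 : ℤˣ) ^ (B (w α) β) : ℤˣ) : ℤ) = 0 ∧
      Odd (B α (w β) + B (w α) β) := by
  have hsum : B α (w β) + B (w α) β = 1 := by
    rw [form_apply_map_add_form_map_apply B hB_add_left w hwB hw_ell, hαβ, neg_neg]
  have hodd : Odd (B α (w β) + B (w α) β) := hsum ▸ odd_one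
  exact ⟨neg_one_zpow_add_neg_one_zpow_of_odd hodd, hodd⟩

/-- Λ is a ℤ-module with a symmetric bilinear form `B`, and `w` is a ℤ-linear
map preserving `B` and satisfying `w²x + wx + x = 0` for all `x` (elliptic of order 3).
If `B α β = -1`, then `(-1)^{B(α,wβ)} + (-1)^{B(wα,β)} = 0`; equivalently,
`B(α,wβ) + B(wα,β)` is odd. -/
theorem stmt_1 (Λ : Type*) [AddCommGroup Λ] (B : Λ → Λ → ℤ)
    (hB_add_left : ∀ x y z : Λ, B (x + y) z = B x z + B y z)
    (hB_add_right : ∀ x y z : Λ, B x (y + z) = B x y + B x z)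
    (hB_symm : ∀ x y : Λ, B x y = B y x)
    (w : Λ →+ Λ)
    (hwB : ∀ x y : Λ, B (w x) (w y) = B x y)
    (hw_ell : ∀ x : Λ, w (w x) + w x + x = 0)
    (α β : Λ) (hαβ : B α β = -1) :
    (((-1 : ℤˣ) ^ (B α (w β)) : ℤˣ) : ℤ) + (((-1 : ℤˣ) ^ (B (w α) β) : ℤˣ) : ℤ) = 0 ∧
      Odd (B α (w β) + B (w α) β) :=
  stmt_1_general Λ B hB_add_left w hwB hw_ell α β hαβ
end

section
/- Let M₀″ ⊆ M₀′ be nonempty closed subsets of Φ_V, let M₁′ ⊆ Φ_V ∖ M₀′, and let f′ : M₁′ → ℝ≥0 satisfy Σ_{α∈M₁′} f′(α) < |M₀′| and, for every i ∈ {1,…,8}, Nᵢ − Σ_{α∈M₀′} nᵢ(α) + Σ_{α∈M₁′} f′(α)·nᵢ(α) > 0. Suppose g : (M₀′ ∖ M₀″) → M₁′ is a function such that: (1) for every α ∈ M₀′ ∖ M₀″ there exist j < l with j ∈ g(α), l ∉ g(α) and α = (g(α) ∖ {j}) ∪ {l} (i.e. the weight difference α − g(α) is a positive root t_l/t_j of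 SL₉); and (2) f′(α) ≥ |g⁻¹(α)| for every α ∈ M₁′. Then P(M₀) holds for every closed subset M₀ of Φ_V with M₀″ ⊆ M₀ ⊆ M₀′. -/
/-! Passing from `M₀'` to `M₀` removes the weights `D = M₀' ∖ M₀ ⊆ M₀' ∖ M₀''`. Compensate by
lowering `f'` at each `α ∈ M₁'` by the number of `β ∈ D` with `g β = α`, which keeps it
nonnegative by (2). The total mass drops by `|D| = |M₀'| − |M₀|`, and the `i`-th pairing
changes by `Σ_{β ∈ D} (nᵢ(β) − nᵢ(g β)) ≥ 0`: by (1), `β` arises from `g β` by replacing `j`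
with a larger `l`, which can only decrease the number of entries `≤ i`. -/

/-- `Φ_V`: the set of all 3-element subsets of `{1,…,9}`, the weights of the
`SL₉`-representation `∧³(ℚ⁹)` (the subset `{i,j,k}` stands for the character `tᵢtⱼtₖ`). -/
def PhiV : Finset (Finset ℕ) := Finset.powersetCard 3 (Finset.Icc 1 9)

/-- The componentwise partial order on weights: for `A = {a₁<a₂<a₃}`, `B = {b₁<b₂<b₃}`,
`A ≤ B` iff `a₁ ≤ b₁`, `a₂ ≤ b₂` and `a₃ ≤ b₃`. -/
def leW (A B : Finset ℕ) : Prop :=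
  List.Forall₂ (· ≤ ·) (Finset.sort A (· ≤ ·)) (Finset.sort B (· ≤ ·))

/-- A subset `M ⊆ Φ_V` is closed if `A ∈ M`, `B ∈ Φ_V` and `A ≤ B` imply `B ∈ M`. -/
def IsClosedW (M : Finset (Finset ℕ)) : Prop :=
  ∀ A ∈ M, ∀ B ∈ PhiV, leW A B → B ∈ M

/-- `nᵢ(α) = i/3 − |{x ∈ α : x ≤ i}|`, the pairing of the weight `α` with the `i`-th
fundamental coweight of `SL₉` for the simple roots `βᵢ = t_{i+1}/tᵢ`. -/
noncomputable def nW (i : ℕ) (A : Finset ℕ) : ℝ :=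
  (i : ℝ) / 3 - ((A.filter (fun x => x ≤ i)).card : ℝ)

/-- `Nᵢ = i(9−i)`, the pairing of the sum of the positive roots of `SL₉` with the `i`-th
fundamental coweight. -/
noncomputable def NW (i : ℕ) : ℝ := (i : ℝ) * (9 - (i : ℝ))

/-- `P(M₀)`: there exist `M₁ ⊆ Φ_V ∖ M₀` and `f : M₁ → ℝ≥0` with `Σ_{α∈M₁} f(α) < |M₀|`
such that `Nᵢ − Σ_{α∈M₀} nᵢ(α) + Σ_{α∈M₁} f(α)·nᵢ(α) > 0` for every `i ∈ {1,…,8}`. -/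
noncomputable def PW (M₀ : Finset (Finset ℕ)) : Prop :=
  ∃ (M₁ : Finset (Finset ℕ)) (f : Finset ℕ → ℝ),
    M₁ ⊆ PhiV \ M₀ ∧ (∀ α ∈ M₁, 0 ≤ f α) ∧
    (∑ α ∈ M₁, f α) < (M₀.card : ℝ) ∧
    ∀ i ∈ Finset.Icc 1 8,
      0 < NW i - (∑ α ∈ M₀, nW i α) + ∑ α ∈ M₁, f α * nW i α

/-- `S_H`, a root basis of `E₈` consisting of weights of `∧³(ℚ⁹)`. -/
def SH : Finset (Finset ℕ) :=
  {{2, 6, 7}, {2, 5, 8}, {3, 4, 8}, {1, 6, 9}, {3, 5, 7}, {2, 4, 9}, {1, 7, 8}, {4, 5, 6}}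

/-- `Φ_V⁺ = {α ∈ Φ_V : γ ≤ α for some γ ∈ S_H}`. -/
noncomputable def PhiVplus : Finset (Finset ℕ) :=
  @Finset.filter _ (fun A => ∃ γ ∈ SH, leW γ A) (fun _ => Classical.propDecidable _) PhiV

open Finset

lemma card_filter_le_insert_erase_le {α : Type*} [LinearOrder α] {s : Finset α} {j l : α}
    (hjl : j < l) (hj : j ∈ s) (i : α) :
    #{x ∈ insert l (s.erase j) | x ≤ i} ≤ #{x ∈ s | x ≤ i} := by
  rw [filter_insert, filter_erase]
  split_ifs with hli
  · have hji : j ∈ s.filter (· ≤ i) := mem_filter.2 ⟨hj, (hjl.trans_le hli).le⟩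
    exact (card_insert_le _ _).trans (card_erase_add_one hji).le
  · exact card_erase_le

lemma nW_le_nW_insert_erase {s : Finset ℕ} {j l : ℕ} (hjl : j < l) (hj : j ∈ s) (i : ℕ) :
    nW i s ≤ nW i (insert l (s.erase j)) :=
  sub_le_sub_left (by exact_mod_cast card_filter_le_insert_erase_le hjl hj i) _

lemma sum_card_fiber_mul_eq {ι κ R : Type*} [DecidableEq κ] [NonAssocSemiring R]
    {s : Finset ι} {t : Finset κ} {g : ι → κ} (h : ∀ i ∈ s, g i ∈ t) (w : κ → R) :
    ∑ k ∈ t, (#{i ∈ s | g i = k} : R) * w k = ∑ i ∈ s, w (g i) := by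
  rw [← sum_fiberwise_of_maps_to h]
  refine sum_congr rfl fun k _ => ?_
  rw [sum_congr rfl fun i hi => congrArg w (mem_filter.1 hi).2, sum_const, nsmul_eq_mul]

theorem PW_of_fiberwise_transfer {M₀ M₀' M₁' : Finset (Finset ℕ)} {f' : Finset ℕ → ℝ}
    {g : Finset ℕ → Finset ℕ} (hM₀ : M₀ ⊆ M₀') (hM₁' : M₁' ⊆ PhiV \ M₀')
    (hf'sum : (∑ α ∈ M₁', f' α) < (#M₀' : ℝ))
    (hf'pos : ∀ i ∈ Icc 1 8, 0 < NW i - (∑ α ∈ M₀', nW i α) + ∑ α ∈ M₁', f' α * nW i α)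
    (hg_mem : ∀ β ∈ M₀' \ M₀, g β ∈ M₁')
    (hg_le : ∀ β ∈ M₀' \ M₀, ∀ i, nW i (g β) ≤ nW i β)
    (hg_fiber : ∀ α ∈ M₁', (#{β ∈ M₀' \ M₀ | g β = α} : ℝ) ≤ f' α) :
    PW M₀ := by
  refine ⟨M₁', fun α => f' α - #{β ∈ M₀' \ M₀ | g β = α},
    hM₁'.trans (sdiff_subset_sdiff subset_rfl hM₀), fun α hα => sub_nonneg.2 (hg_fiber α hα),
    ?_, fun i hi => ?_⟩
  · have hD : (#(M₀' \ M₀) : ℝ) = #M₀' - #M₀ := by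
      rw [card_sdiff_of_subset hM₀, Nat.cast_sub (card_le_card hM₀)]
    rw [sum_sub_distrib, ← Nat.cast_sum, ← card_eq_sum_card_fiberwise hg_mem, hD]
    linarith
  · simp only [sub_mul, sum_sub_distrib, sum_card_fiber_mul_eq hg_mem]
    have hsplit := sum_sdiff hM₀ (f := nW i)
    have hle := sum_le_sum fun β hβ => hg_le β hβ i
    linarith [hf'pos i hi]

theorem stmt_3_general (M₀'' M₀' : Finset (Finset ℕ))
    (M₁' : Finset (Finset ℕ)) (hM₁' : M₁' ⊆ PhiV \ M₀')
    (f' : Finset ℕ → ℝ)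
    (hf'sum : (∑ α ∈ M₁', f' α) < (M₀'.card : ℝ))
    (hf'pos : ∀ i ∈ Finset.Icc 1 8,
      0 < NW i - (∑ α ∈ M₀', nW i α) + ∑ α ∈ M₁', f' α * nW i α)
    (g : Finset ℕ → Finset ℕ)
    (hg_mem : ∀ α ∈ M₀' \ M₀'', g α ∈ M₁')
    (hg_root : ∀ α ∈ M₀' \ M₀'', ∃ j l : ℕ, j < l ∧ j ∈ g α ∧ l ∉ g α ∧
        α = insert l ((g α).erase j))
    (hg_fiber : ∀ α ∈ M₁', (((M₀' \ M₀'').filter (fun β => g β = α)).card : ℝ) ≤ f' α) :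
    ∀ M₀ : Finset (Finset ℕ), IsClosedW M₀ → M₀'' ⊆ M₀ → M₀ ⊆ M₀' → PW M₀ := by
  intro M₀ _ hM₀'' hM₀'
  have hD : M₀' \ M₀ ⊆ M₀' \ M₀'' := sdiff_subset_sdiff subset_rfl hM₀''
  refine PW_of_fiberwise_transfer hM₀' hM₁' hf'sum hf'pos (fun β hβ => hg_mem β (hD hβ))
    (fun β hβ i => ?_) fun α hα =>
      (Nat.cast_le.2 (card_le_card (filter_subset_filter _ hD))).trans (hg_fiber α hα)
  obtain ⟨j, l, hjl, hj, -, hβ_eq⟩ := hg_root β (hD hβ)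
  exact (nW_le_nW_insert_erase hjl hj i).trans_eq (congrArg (nW i) hβ_eq.symm)

/-- Let `M₀″ ⊆ M₀′` be nonempty closed subsets of `Φ_V`, `M₁′ ⊆ Φ_V ∖ M₀′`,
and `f′ : M₁′ → ℝ≥0` with `Σ f′ < |M₀′|` and `Nᵢ − Σ_{M₀′} nᵢ + Σ_{M₁′} f′·nᵢ > 0` for all
`i ∈ {1,…,8}`. If `g : (M₀′ ∖ M₀″) → M₁′` satisfies (1) `α − g(α)` is a positive root
`t_l/t_j` of `SL₉` (i.e. `α = (g(α) ∖ {j}) ∪ {l}` with `j ∈ g(α)`, `l ∉ g(α)`, `j < l`)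
for each `α ∈ M₀′ ∖ M₀″` and (2) `f′(α) ≥ |g⁻¹(α)|` for each `α ∈ M₁′`, then `P(M₀)` holds
for every closed `M₀` with `M₀″ ⊆ M₀ ⊆ M₀′`. -/
theorem stmt_3 (M₀'' M₀' : Finset (Finset ℕ))
    (hsub' : M₀' ⊆ PhiV) (hsub'' : M₀'' ⊆ M₀')
    (hne'' : M₀''.Nonempty) (hne' : M₀'.Nonempty)
    (hclosed'' : IsClosedW M₀'') (hclosed' : IsClosedW M₀')
    (M₁' : Finset (Finset ℕ)) (hM₁' : M₁' ⊆ PhiV \ M₀')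
    (f' : Finset ℕ → ℝ) (hf'0 : ∀ α ∈ M₁', 0 ≤ f' α)
    (hf'sum : (∑ α ∈ M₁', f' α) < (M₀'.card : ℝ))
    (hf'pos : ∀ i ∈ Finset.Icc 1 8,
      0 < NW i - (∑ α ∈ M₀', nW i α) + ∑ α ∈ M₁', f' α * nW i α)
    (g : Finset ℕ → Finset ℕ)
    (hg_mem : ∀ α ∈ M₀' \ M₀'', g α ∈ M₁')
    (hg_root : ∀ α ∈ M₀' \ M₀'', ∃ j l : ℕ, j < l ∧ j ∈ g α ∧ l ∉ g α ∧
        α = insert l ((g α).erase j))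
    (hg_fiber : ∀ α ∈ M₁', (((M₀' \ M₀'').filter (fun β => g β = α)).card : ℝ) ≤ f' α) :
    ∀ M₀ : Finset (Finset ℕ), IsClosedW M₀ → M₀'' ⊆ M₀ → M₀ ⊆ M₀' → PW M₀ :=
  stmt_3_general M₀'' M₀' M₁' hM₁' f' hf'sum hf'pos g hg_mem hg_root hg_fiber
end

section
/- If M₀ is a nonempty closed subset of Φ_V with |M₀| ≤ 10, then for every i ∈ {1,…,8} one has Σ_{α∈M₀} nᵢ(α) < Nᵢ; that is, the pairing of (Σ_{positive roots of SL₉} α) − (Σ_{α∈M₀} α) with each fundamental coweight of SL₉ is strictly positive. -/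
/-!
A weight `α ⊆ {1,…,9}` has at least `3 - (9 - i)` elements `≤ i`, so
`nᵢ(α) ≤ i/3 - (3 - (9 - i))`, and ten times this bound is below `Nᵢ` except for `i = 6`. There
`n₆(α) ≤ 1` for every weight but `{7,8,9}`, where `n₆ = 2`, so the sum is at most `|M₀| + 1 ≤ 11`.
-/

open Finset

section CountingBelow

variable {α : Finset ℕ} {n : ℕ}

lemma filter_not_le_subset_Icc (hα : α ⊆ Icc 1 n) (i : ℕ) :
    α.filter (fun x => ¬ x ≤ i) ⊆ Icc (i + 1) n := by
  intro x hx
  rw [mem_filter] at hx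
  have := hα hx.1
  rw [mem_Icc] at this ⊢
  omega

lemma card_sub_le_card_filter_le (hα : α ⊆ Icc 1 n) (i : ℕ) :
    α.card - (n - i) ≤ (α.filter (fun x => x ≤ i)).card := by
  have hnot := card_le_card (filter_not_le_subset_Icc hα i)
  rw [Nat.card_Icc] at hnot
  have := card_filter_add_card_filter_not (s := α) (fun x => x ≤ i)
  omega

lemma eq_Icc_of_filter_le_eq_empty (hα : α ⊆ Icc 1 n) {i : ℕ} (hcard : α.card = n - i)
    (hempty : α.filter (fun x => x ≤ i) = ∅) : α = Icc (i + 1) n := by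
  have hsub : α ⊆ Icc (i + 1) n := by
    have hall : α.filter (fun x => ¬ x ≤ i) = α := by rw [filter_not, hempty, sdiff_empty]
    simpa only [hall] using filter_not_le_subset_Icc hα i
  exact eq_of_subset_of_card_le hsub (by rw [Nat.card_Icc]; omega)

end CountingBelow

lemma subset_Icc_and_card_of_mem_phiV {α : Finset ℕ} (h : α ∈ PhiV) :
    α ⊆ Icc 1 9 ∧ α.card = 3 := by
  simpa [PhiV, mem_powersetCard] using h

lemma nW_le_of_le_card_filter {i k : ℕ} {α : Finset ℕ}
    (h : k ≤ (α.filter (fun x => x ≤ i)).card) : nW i α ≤ (i : ℝ) / 3 - k := by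
  have : (k : ℝ) ≤ (α.filter (fun x => x ≤ i)).card := by exact_mod_cast h
  unfold nW
  linarith

lemma nW_le_of_mem_phiV (i : ℕ) {α : Finset ℕ} (h : α ∈ PhiV) :
    nW i α ≤ (i : ℝ) / 3 - ((3 - (9 - i) : ℕ) : ℝ) := by
  obtain ⟨hα, hcard⟩ := subset_Icc_and_card_of_mem_phiV h
  apply nW_le_of_le_card_filter
  simpa [hcard] using card_sub_le_card_filter_le hα i

lemma nW_six_le_of_mem_phiV {α : Finset ℕ} (h : α ∈ PhiV) :
    nW 6 α ≤ 1 + if α = Icc 7 9 then 1 else 0 := by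
  obtain ⟨hα, hcard⟩ := subset_Icc_and_card_of_mem_phiV h
  split_ifs with htop
  · have := nW_le_of_mem_phiV 6 h
    norm_num at this ⊢
    linarith
  · have hpos : 1 ≤ (α.filter (fun x => x ≤ 6)).card := by
      rw [Nat.one_le_iff_ne_zero, Ne, card_eq_zero]
      exact fun hempty => htop (eq_Icc_of_filter_le_eq_empty hα hcard hempty)
    have := nW_le_of_le_card_filter hpos
    norm_num at this ⊢
    exact this

lemma sum_nW_six_lt {M₀ : Finset (Finset ℕ)} (hsub : M₀ ⊆ PhiV) (hcard : M₀.card ≤ 10) :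
    ∑ α ∈ M₀, nW 6 α < NW 6 := by
  have hsum := sum_le_sum fun α hα => nW_six_le_of_mem_phiV (hsub hα)
  rw [sum_add_distrib, sum_ite_eq' M₀ (Icc 7 9) (fun _ => (1 : ℝ)), sum_const,
    nsmul_eq_mul, mul_one] at hsum
  have hcardR : (M₀.card : ℝ) ≤ 10 := by exact_mod_cast hcard
  have hite : (if Icc 7 9 ∈ M₀ then (1 : ℝ) else 0) ≤ 1 := by split_ifs <;> norm_num
  norm_num [NW]
  linarith

theorem stmt_4_general (M₀ : Finset (Finset ℕ))
    (hsub : M₀ ⊆ PhiV)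
    (hcard : M₀.card ≤ 10) :
    ∀ i ∈ Finset.Icc 1 8, (∑ α ∈ M₀, nW i α) < NW i := by
  intro i hi
  obtain ⟨hi1, hi8⟩ := mem_Icc.mp hi
  by_cases hi6 : i = 6
  · subst hi6
    exact sum_nW_six_lt hsub hcard
  have hsum : ∑ α ∈ M₀, nW i α ≤ M₀.card * ((i : ℝ) / 3 - ((3 - (9 - i) : ℕ) : ℝ)) := by
    simpa only [nsmul_eq_mul] using
      sum_le_card_nsmul M₀ _ _ fun α hα => nW_le_of_mem_phiV i (hsub hα)
  have hcardR : (M₀.card : ℝ) ≤ 10 := by exact_mod_cast hcard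
  interval_cases i
  all_goals first
    | contradiction
    | norm_num [NW] at hsum ⊢; linarith

/-- If `M₀` is a nonempty closed subset of `Φ_V` with `|M₀| ≤ 10`, then for
every `i ∈ {1,…,8}` one has `Σ_{α∈M₀} nᵢ(α) < Nᵢ`; that is, the pairing of
`(Σ_{positive roots of SL₉} α) − (Σ_{α∈M₀} α)` with each fundamental coweight of `SL₉` is
strictly positive. -/
theorem stmt_4 (M₀ : Finset (Finset ℕ))
    (hsub : M₀ ⊆ PhiV) (hne : M₀.Nonempty) (hclosed : IsClosedW M₀)
    (hcard : M₀.card ≤ 10) :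
    ∀ i ∈ Finset.Icc 1 8, (∑ α ∈ M₀, nW i α) < NW i :=
  stmt_4_general M₀ hsub hcard
end

section
/- If λ ∈ Λ satisfies B((1−w)λ, μ) ≡ 0 (mod 3) for every μ ∈ Λ, then λ ∈ (1−w)Λ. That is, the induced pairing on the coinvariants Λ/(1−w)Λ given by (λ, μ) ↦ B((1−w)λ, μ) mod 3 is non-degenerate. -/
/-!
Unimodularity turns the hypothesis into `l - w l = 3μ` for some `μ`, and it also rules out
torsion in `Λ`. Since `w² + w + 1 = 0`, the element `1 - w` divides `3` in `ℤ[w]`, and cancelling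
the factor `3` shows `l = (1 - w)(1 + w)μ`.
-/

namespace IntPairing

variable {Λ : Type*} [AddCommGroup Λ] {B : Λ → Λ → ℤ}

theorem zsmul_left (hB_add_left : ∀ x y z : Λ, B (x + y) z = B x z + B y z)
    (n : ℤ) (x m : Λ) : B (n • x) m = n * B x m :=
  (AddMonoidHom.mk' (B · m) fun x y => hB_add_left x y m).map_zsmul n x

theorem eq_of_forall_eq (hB_add_right : ∀ x y z : Λ, B x (y + z) = B x y + B x z)
    (hB_unimodular : ∀ φ : Λ →+ ℤ, ∃! l : Λ, ∀ m : Λ, B l m = φ m)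
    {x y : Λ} (h : ∀ m, B x m = B y m) : x = y :=
  (hB_unimodular (AddMonoidHom.mk' (B y) (hB_add_right y))).unique h fun _ => rfl

theorem zsmul_injective (hB_add_left : ∀ x y z : Λ, B (x + y) z = B x z + B y z)
    (hB_add_right : ∀ x y z : Λ, B x (y + z) = B x y + B x z)
    (hB_unimodular : ∀ φ : Λ →+ ℤ, ∃! l : Λ, ∀ m : Λ, B l m = φ m)
    {n : ℤ} (hn : n ≠ 0) : Function.Injective (n • · : Λ → Λ) := by
  intro x y hxy
  refine eq_of_forall_eq hB_add_right hB_unimodular fun m => ?_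
  have := congrArg (B · m) hxy
  simp only [zsmul_left hB_add_left] at this
  exact mul_left_cancel₀ hn this

theorem exists_zsmul_eq_of_forall_dvd (hB_add_left : ∀ x y z : Λ, B (x + y) z = B x z + B y z)
    (hB_add_right : ∀ x y z : Λ, B x (y + z) = B x y + B x z)
    (hB_unimodular : ∀ φ : Λ →+ ℤ, ∃! l : Λ, ∀ m : Λ, B l m = φ m)
    {n : ℤ} {v : Λ} (hv : ∀ m, n ∣ B v m) : ∃ μ, n • μ = v := by
  let φ : Λ →+ ℤ := AddMonoidHom.mk' (fun m => B v m / n) fun m m' => by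
    rw [hB_add_right, Int.add_ediv_of_dvd_right (hv m')]
  obtain ⟨μ, hμ, -⟩ := hB_unimodular φ
  refine ⟨μ, eq_of_forall_eq hB_add_right hB_unimodular fun m => ?_⟩
  rw [zsmul_left hB_add_left, hμ]
  exact Int.mul_ediv_cancel' (hv m)

end IntPairing

/-- Apply `2 + w` to `h`: as `w² + w + 1 = 0`, `(2 + w)(1 - w) = 3` and `(1 - w)(1 + w) = 2 + w`. -/
theorem eq_sub_map_of_sub_map_eq_three_zsmul {Λ : Type*} [AddCommGroup Λ] {w : Λ →+ Λ}
    (hw : ∀ x : Λ, w (w x) + w x + x = 0)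
    (h3 : Function.Injective ((3 : ℤ) • · : Λ → Λ)) {l μ : Λ} (h : l - w l = (3 : ℤ) • μ) :
    l = (μ + w μ) - w (μ + w μ) := by
  apply h3
  have hwl := congrArg w h
  simp only [map_sub, map_zsmul] at hwl
  simp only [map_add]
  linear_combination (norm := module) hw l + 3 • hw μ + 2 • h + hwl

theorem stmt_9_general (Λ : Type*) [AddCommGroup Λ]
    (B : Λ → Λ → ℤ)
    (hB_add_left : ∀ x y z : Λ, B (x + y) z = B x z + B y z)
    (hB_add_right : ∀ x y z : Λ, B x (y + z) = B x y + B x z)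
    (hB_unimodular : ∀ φ : Λ →+ ℤ, ∃! l : Λ, ∀ m : Λ, B l m = φ m)
    (w : Λ →+ Λ)
    (hw_ell : ∀ x : Λ, w (w x) + w x + x = 0)
    (l : Λ) (hl : ∀ m : Λ, (3 : ℤ) ∣ B (l - w l) m) :
    ∃ ν : Λ, l = ν - w ν := by
  obtain ⟨μ, hμ⟩ :=
    IntPairing.exists_zsmul_eq_of_forall_dvd hB_add_left hB_add_right hB_unimodular hl
  have h3 := IntPairing.zsmul_injective hB_add_left hB_add_right hB_unimodular three_ne_zero
  exact ⟨μ + w μ, eq_sub_map_of_sub_map_eq_three_zsmul hw_ell h3 hμ.symm⟩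

/-- Λ is a free ℤ-module of finite rank with a symmetric bilinear unimodular
form `B` (every homomorphism `Λ → ℤ` is `B(λ, ·)` for a unique `λ`), and `w` is a ℤ-linear map
preserving `B` with `w²x + wx + x = 0` for all `x`. If `B((1−w)λ, μ) ≡ 0 (mod 3)` for every
`μ`, then `λ ∈ (1−w)Λ`; i.e. the induced pairing on the coinvariants `Λ/(1−w)Λ` is
non-degenerate. -/
theorem stmt_9 (Λ : Type*) [AddCommGroup Λ] [Module.Free ℤ Λ] [Module.Finite ℤ Λ]
    (B : Λ → Λ → ℤ)
    (hB_add_left : ∀ x y z : Λ, B (x + y) z = B x z + B y z)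
    (hB_add_right : ∀ x y z : Λ, B x (y + z) = B x y + B x z)
    (hB_symm : ∀ x y : Λ, B x y = B y x)
    (hB_unimodular : ∀ φ : Λ →+ ℤ, ∃! l : Λ, ∀ m : Λ, B l m = φ m)
    (w : Λ →+ Λ)
    (hwB : ∀ x y : Λ, B (w x) (w y) = B x y)
    (hw_ell : ∀ x : Λ, w (w x) + w x + x = 0)
    (l : Λ) (hl : ∀ m : Λ, (3 : ℤ) ∣ B (l - w l) m) :
    ∃ ν : Λ, l = ν - w ν :=
  stmt_9_general Λ B hB_add_left hB_add_right hB_unimodular w hw_ell l hl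
end

section
/- The rank n of Λ is even, and the coinvariants Λ/(w−1)Λ form a finite elementary abelian 3-group of order 3^{n/2}, i.e. Λ/(w−1)Λ ≅ (ℤ/3ℤ)^{n/2}. (In particular, for an elliptic automorphism of order 3 of the E₈ root lattice, the coinvariants are isomorphic to 𝔽₃⁴.) -/
/-!
Put `φ = w - 1`. From `w² + w + 1 = 0` we get `φ² = -3w`, and `w` is invertible, so `φ²Λ = 3Λ`,
a sublattice of index `3ⁿ`. As `φ` is injective, `[φΛ : φ²Λ] = [Λ : φΛ]`, hence
`[Λ : φΛ]² = 3ⁿ`, so `n = 2m` and `|Λ/φΛ| = 3ᵐ`. Since `3Λ = φ²Λ ⊆ φΛ`, the quotient `Λ/φΛ` is an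
`𝔽₃`-vector space, which must then have dimension `m`.
-/

open Module

namespace AddMonoidHom

theorem index_range_comp_of_injective {G G' G'' : Type*} [AddGroup G] [AddGroup G'] [AddGroup G'']
    {f : G' →+ G} (hf : Function.Injective f) (g : G'' →+ G') :
    (f.comp g).range.index = g.range.index * f.range.index := by
  rw [← map_range, range_eq_map f, ← AddSubgroup.relIndex_mul_index (AddSubgroup.map_mono le_top),
    AddSubgroup.relIndex_map_map_of_injective _ _ hf, AddSubgroup.relIndex_top_right]

variable {M : Type*} [AddCommGroup M] {w : M →+ M}

theorem sub_id_apply_sub_id_apply (hw : ∀ x, w (w x) + w x + x = 0) (x : M) :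
    (w - id M) ((w - id M) x) = 3 • -w x := by
  have hww : w (w x) = -w x - x := by rw [← sub_eq_zero, ← hw x]; abel
  simp only [sub_apply, id_apply, map_sub, hww]
  abel

theorem range_sub_id_comp_sub_id (hw : ∀ x, w (w x) + w x + x = 0) :
    ((w - id M).comp (w - id M)).range = (nsmulAddMonoidHom 3).range := by
  ext y
  constructor
  · rintro ⟨x, rfl⟩
    exact ⟨-w x, (sub_id_apply_sub_id_apply hw x).symm⟩
  · rintro ⟨z, rfl⟩
    -- `-w` is surjective: `-w (w z + z) = z`.
    refine ⟨w z + z, ?_⟩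
    rw [comp_apply, sub_id_apply_sub_id_apply hw, map_add, ← neg_eq_of_add_eq_zero_left (hw z)]
    simp

theorem three_nsmul_mem_range_sub_id (hw : ∀ x, w (w x) + w x + x = 0) (x : M) :
    3 • x ∈ (w - id M).range := by
  obtain ⟨y, hy⟩ : 3 • x ∈ ((w - id M).comp (w - id M)).range := by
    rw [range_sub_id_comp_sub_id hw]
    exact ⟨x, rfl⟩
  exact ⟨_, hy⟩

theorem injective_sub_id [IsAddTorsionFree M] (hw : ∀ x, w (w x) + w x + x = 0) :
    Function.Injective (w - id M) := by
  rw [← ker_eq_bot_iff, AddSubgroup.eq_bot_iff_forall]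
  intro x hx
  have hwx : w x = x := sub_eq_zero.mp hx
  have h3x : 3 • x = 3 • (0 : M) := by rw [nsmul_zero, ← hw x, hwx, hwx]; abel
  exact nsmul_right_injective three_ne_zero h3x

theorem index_range_sub_id_sq [IsAddTorsionFree M] [Free ℤ M] [Module.Finite ℤ M]
    (hw : ∀ x, w (w x) + w x + x = 0) :
    (w - id M).range.index ^ 2 = 3 ^ finrank ℤ M := by
  rw [sq, ← index_range_comp_of_injective (injective_sub_id hw), range_sub_id_comp_sub_id hw,
    AddSubgroup.index_range_nsmul]

end AddMonoidHom

theorem Nat.exists_eq_two_mul_of_sq_eq_prime_pow {p a n : ℕ} (hp : p.Prime) (h : a ^ 2 = p ^ n) :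
    ∃ m, n = 2 * m ∧ a = p ^ m := by
  obtain ⟨m, -, rfl⟩ := (Nat.dvd_prime_pow hp).mp (Dvd.intro_left _ ((sq a).symm.trans h))
  refine ⟨m, Nat.pow_right_injective hp.two_le ?_, rfl⟩
  simp only [← h, ← pow_mul, mul_comm]

theorem ZMod.nonempty_linearEquiv_fin_pi_of_card_eq_pow {V : Type*} [AddCommGroup V] {p k : ℕ}
    [Fact p.Prime] [Module (ZMod p) V] [Finite V] (hcard : Nat.card V = p ^ k) :
    Nonempty (V ≃ₗ[ZMod p] (Fin k → ZMod p)) := by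
  have : Module.Finite (ZMod p) V := .of_finite
  have hk : finrank (ZMod p) V = k := by
    apply Nat.pow_right_injective (Fact.out : p.Prime).two_le
    simpa only [Nat.card_zmod, hcard] using (natCard_eq_pow_finrank (K := ZMod p) (V := V)).symm
  exact ⟨(finBasisOfFinrankEq (ZMod p) V hk).equivFun⟩

theorem AddCommGroup.nonempty_addEquiv_fin_pi_zmod {G : Type*} [AddCommGroup G] {p k : ℕ}
    [Fact p.Prime] (hp : ∀ x : G, p • x = 0) (hcard : Nat.card G = p ^ k) :
    Nonempty (G ≃+ (Fin k → ZMod p)) := by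
  have : Finite G := Nat.finite_of_card_ne_zero (by rw [hcard]; exact pow_ne_zero _ (NeZero.ne p))
  let _ := AddCommGroup.zmodModule hp
  exact (ZMod.nonempty_linearEquiv_fin_pi_of_card_eq_pow hcard).map LinearEquiv.toAddEquiv

/-- Λ is a free ℤ-module of finite rank `n` and `w : Λ → Λ` is a ℤ-linear
endomorphism with `w²x + wx + x = 0` for all `x`. Then `n` is even and the coinvariants
`Λ/(w−1)Λ` form an elementary abelian 3-group of order `3^(n/2)`, i.e.
`Λ/(w−1)Λ ≅ (ℤ/3ℤ)^(n/2)`. -/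
theorem stmt_10 (Λ : Type*) [AddCommGroup Λ] [Module.Free ℤ Λ] [Module.Finite ℤ Λ]
    (w : Λ →ₗ[ℤ] Λ) (hw_ell : ∀ x : Λ, w (w x) + w x + x = 0) :
    ∃ m : ℕ, Module.finrank ℤ Λ = 2 * m ∧
      Nonempty ((Λ ⧸ LinearMap.range (w - LinearMap.id)) ≃+ (Fin m → ZMod 3)) := by
  have : IsAddTorsionFree Λ := Module.isTorsionFree_int_iff_isAddTorsionFree.mp inferInstance
  obtain ⟨m, hm, hcard⟩ := Nat.exists_eq_two_mul_of_sq_eq_prime_pow Nat.prime_three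
    (AddMonoidHom.index_range_sub_id_sq (w := w.toAddMonoidHom) hw_ell)
  refine ⟨m, hm, AddCommGroup.nonempty_addEquiv_fin_pi_zmod ?_ hcard⟩
  intro q
  obtain ⟨x, rfl⟩ := Submodule.Quotient.mk_surjective _ q
  rw [← Submodule.Quotient.mk_smul, Submodule.Quotient.mk_eq_zero]
  exact AddMonoidHom.three_nsmul_mem_range_sub_id (w := w.toAddMonoidHom) hw_ell x
end

section
/- The map λ ↦ (1−w)λ mod 3Λ induces a group isomorphism from the coinvariants Λ/(1−w)Λ onto the w-fixed subgroup {x ∈ Λ/3Λ : w̄x = x} of Λ/3Λ, where w̄ is the endomorphism induced by w on Λ/3Λ. -/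
/-!
The relation `w² + w + 1 = 0` makes `Λ` a module over the Eisenstein integers `ℤ[ω]`, and
`π = 1 - w` plays the role of the prime above `3`: `π² = -3w` and `π²(1 + w) = 3`. The first
identity shows that `π` maps `πΛ` into `3Λ`, so `λ ↦ πλ mod 3Λ` is defined on `Λ/πΛ`, and that its
image consists of `w̄`-fixed classes. Since `Λ` has no `3`-torsion, `π` is injective, so
`πλ ∈ 3Λ = π²(1 + w)Λ` forces `λ ∈ πΛ`; this gives both injectivity and that every fixed class
`λ mod 3Λ`, i.e. one with `πλ ∈ 3Λ`, is in the image.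
-/

namespace EisensteinLattice

variable {M : Type*} [AddCommGroup M]

theorem range_three_smul_id_le_comap (w : M →ₗ[ℤ] M) :
    LinearMap.range ((3 : ℤ) • (LinearMap.id : M →ₗ[ℤ] M)) ≤
      (LinearMap.range ((3 : ℤ) • (LinearMap.id : M →ₗ[ℤ] M))).comap w := by
  rintro _ ⟨m, rfl⟩
  exact ⟨w m, by simp⟩

/-- The endomorphism `w̄` of `M/3M`. -/
def modThreeMap (w : M →ₗ[ℤ] M) :
    (M ⧸ LinearMap.range ((3 : ℤ) • (LinearMap.id : M →ₗ[ℤ] M))) →ₗ[ℤ]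
      M ⧸ LinearMap.range ((3 : ℤ) • (LinearMap.id : M →ₗ[ℤ] M)) :=
  Submodule.mapQ _ _ w (range_three_smul_id_le_comap w)

@[simp]
theorem modThreeMap_mk (w : M →ₗ[ℤ] M) (l : M) :
    modThreeMap w (Submodule.Quotient.mk l) = Submodule.Quotient.mk (w l) :=
  rfl

variable {w : M →ₗ[ℤ] M} (hw : ∀ x, w (w x) + w x + x = 0)
include hw

theorem id_sub_sq_apply (x : M) : (x - w x) - w (x - w x) = -((3 : ℤ) • w x) := by
  rw [map_sub]
  linear_combination (norm := module) hw x

theorem three_smul_eq_id_sub_sq_apply_add (m : M) :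
    (3 : ℤ) • m = (m + w m - w (m + w m)) - w (m + w m - w (m + w m)) := by
  rw [id_sub_sq_apply hw, map_add]
  linear_combination (norm := module) (3 : ℤ) • hw m

theorem injective_id_sub [IsAddTorsionFree M] :
    Function.Injective (LinearMap.id - w : M →ₗ[ℤ] M) := by
  rw [injective_iff_map_eq_zero]
  intro x hx
  rw [LinearMap.sub_apply, LinearMap.id_apply, sub_eq_zero] at hx
  have h3 : (3 : ℤ) • x = (3 : ℤ) • 0 := by
    rw [smul_zero, ← hw x, ← hx, ← hx]
    module
  exact zsmul_right_injective (by norm_num) h3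

theorem mem_range_id_sub_of_sub_mem_range_three_smul [IsAddTorsionFree M] {l : M}
    (hl : l - w l ∈ LinearMap.range ((3 : ℤ) • (LinearMap.id : M →ₗ[ℤ] M))) :
    l ∈ LinearMap.range (LinearMap.id - w) := by
  obtain ⟨m, hm⟩ := hl
  refine ⟨m + w m, injective_id_sub hw ?_⟩
  simp only [LinearMap.sub_apply, LinearMap.id_apply, ← three_smul_eq_id_sub_sq_apply_add hw m]
  exact hm

theorem range_id_sub_le_ker :
    LinearMap.range (LinearMap.id - w) ≤ LinearMap.ker
      ((LinearMap.range ((3 : ℤ) • (LinearMap.id : M →ₗ[ℤ] M))).mkQ ∘ₗ (LinearMap.id - w)) := by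
  rintro _ ⟨x, rfl⟩
  refine (Submodule.Quotient.mk_eq_zero _).mpr ⟨-(w x), ?_⟩
  simp only [LinearMap.sub_apply, LinearMap.id_apply, id_sub_sq_apply hw]
  exact smul_neg (3 : ℤ) (w x)

/-- Well defined because `(1 - w)² = -3w`. -/
def coinvariantsToModThree :
    (M ⧸ LinearMap.range (LinearMap.id - w)) →ₗ[ℤ]
      M ⧸ LinearMap.range ((3 : ℤ) • (LinearMap.id : M →ₗ[ℤ] M)) :=
  Submodule.liftQ _ _ (range_id_sub_le_ker hw)

@[simp]
theorem coinvariantsToModThree_mk (l : M) :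
    coinvariantsToModThree hw (Submodule.Quotient.mk l) = Submodule.Quotient.mk (l - w l) :=
  rfl

theorem coinvariantsToModThree_injective [IsAddTorsionFree M] :
    Function.Injective (coinvariantsToModThree hw) := by
  rw [injective_iff_map_eq_zero]
  intro z hz
  obtain ⟨l, rfl⟩ := Submodule.Quotient.mk_surjective _ z
  rw [coinvariantsToModThree_mk, Submodule.Quotient.mk_eq_zero] at hz
  exact (Submodule.Quotient.mk_eq_zero _).mpr (mem_range_id_sub_of_sub_mem_range_three_smul hw hz)

theorem range_coinvariantsToModThree [IsAddTorsionFree M] :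
    Set.range (coinvariantsToModThree hw) = Function.fixedPoints (modThreeMap w) := by
  ext x
  constructor
  · rintro ⟨z, rfl⟩
    obtain ⟨y, rfl⟩ := Submodule.Quotient.mk_surjective _ z
    rw [Function.mem_fixedPoints, Function.IsFixedPt, coinvariantsToModThree_mk, modThreeMap_mk,
      Submodule.Quotient.eq, sub_mem_comm_iff, id_sub_sq_apply hw]
    exact neg_mem ⟨w y, rfl⟩
  · intro hx
    obtain ⟨l, rfl⟩ := Submodule.Quotient.mk_surjective _ x
    rw [Function.mem_fixedPoints, Function.IsFixedPt, modThreeMap_mk, Submodule.Quotient.eq,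
      sub_mem_comm_iff] at hx
    obtain ⟨y, rfl⟩ := mem_range_id_sub_of_sub_mem_range_three_smul hw hx
    exact ⟨Submodule.Quotient.mk y, rfl⟩

end EisensteinLattice

open EisensteinLattice

theorem stmt_11_general (Λ : Type*) [AddCommGroup Λ] [Module.Free ℤ Λ]
    (w : Λ →ₗ[ℤ] Λ) (hw_ell : ∀ x : Λ, w (w x) + w x + x = 0) :
    ∃ f : (Λ ⧸ LinearMap.range (LinearMap.id - w)) →+
        (Λ ⧸ LinearMap.range ((3 : ℤ) • (LinearMap.id : Λ →ₗ[ℤ] Λ))),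
      (∀ l : Λ, f (Submodule.Quotient.mk l) = Submodule.Quotient.mk (l - w l)) ∧
      Function.Injective f ∧
      Set.range f = {x : Λ ⧸ LinearMap.range ((3 : ℤ) • (LinearMap.id : Λ →ₗ[ℤ] Λ)) |
        ∀ l : Λ, Submodule.Quotient.mk l = x →
          (Submodule.Quotient.mk (w l) :
            Λ ⧸ LinearMap.range ((3 : ℤ) • (LinearMap.id : Λ →ₗ[ℤ] Λ))) = x} := by
  have : IsAddTorsionFree Λ := Module.isTorsionFree_int_iff_isAddTorsionFree.mp inferInstance
  refine ⟨(coinvariantsToModThree hw_ell).toAddMonoidHom, coinvariantsToModThree_mk hw_ell,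
    coinvariantsToModThree_injective hw_ell, ?_⟩
  rw [LinearMap.toAddMonoidHom_coe, range_coinvariantsToModThree hw_ell]
  ext x
  refine ⟨fun hx l hl => by subst hl; exact hx, fun hx => ?_⟩
  obtain ⟨l, rfl⟩ := Submodule.Quotient.mk_surjective _ x
  exact hx l rfl

/-- Λ is a free ℤ-module of finite rank and `w : Λ → Λ` is a ℤ-linear
endomorphism with `w²x + wx + x = 0` for all `x`. The map `λ ↦ (1−w)λ mod 3Λ` induces a
group isomorphism from the coinvariants `Λ/(1−w)Λ` onto the `w`-fixed subgroup
`{x ∈ Λ/3Λ : w̄x = x}` of `Λ/3Λ`: there is an injective additive map `f` on the coinvariants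
with `f(λ mod (1−w)Λ) = (λ − wλ) mod 3Λ` whose range is exactly the set of classes fixed by
the endomorphism induced by `w`. -/
theorem stmt_11 (Λ : Type*) [AddCommGroup Λ] [Module.Free ℤ Λ] [Module.Finite ℤ Λ]
    (w : Λ →ₗ[ℤ] Λ) (hw_ell : ∀ x : Λ, w (w x) + w x + x = 0) :
    ∃ f : (Λ ⧸ LinearMap.range (LinearMap.id - w)) →+
        (Λ ⧸ LinearMap.range ((3 : ℤ) • (LinearMap.id : Λ →ₗ[ℤ] Λ))),
      (∀ l : Λ, f (Submodule.Quotient.mk l) = Submodule.Quotient.mk (l - w l)) ∧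
      Function.Injective f ∧
      Set.range f = {x : Λ ⧸ LinearMap.range ((3 : ℤ) • (LinearMap.id : Λ →ₗ[ℤ] Λ)) |
        ∀ l : Λ, Submodule.Quotient.mk l = x →
          (Submodule.Quotient.mk (w l) :
            Λ ⧸ LinearMap.range ((3 : ℤ) • (LinearMap.id : Λ →ₗ[ℤ] Λ))) = x} :=
  stmt_11_general Λ w hw_ell
end
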